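/- arXiv:2306.14533 — 9 statements merged into one kernel-verified Lean document; each statement's English description precedes it below -/
import Mathlib

section
/- Let M be a compact metric space, λ a finite Borel measure on M, and p ∈ (1, ∞) with Hölder conjugate p* (1/p + 1/p* = 1). Let f, a, b : M → ℝ be continuous with f(x) > 0 for all x. For positive continuous functions u, v define D(u, v) = p∫_M v dλ + p*∫_M u dλ − p·p*·∫_M u^{1/p} v^{1/p*} dλ. Then the map (s, t) ↦ D(f + s·a, f + t·b) is twice continuously differentiable on a neighborhood of (0,0), and −∂_s ∂_t D(f + s·a, f + t·b)|_{s=t=0} = ∫_M (a·b / f) dλ. -/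
/-!
Near `(0, 0)` the base points `f + s a` and `f + t b` stay above a positive constant, and there
`s ↦ (f + s a) ^ (1/p)` and `t ↦ (f + t b) ^ (1/q)` are smooth curves in the Banach algebra
`C(M, ℝ)`: differentiating lowers the exponent by one and multiplies by the direction, and a curve
of continuous functions whose pointwise derivative is continuous in the sup norm is differentiable,
by the fundamental theorem of calculus in `C(M, ℝ)`. So near the origin `D` is affine in `(s, t)`
minus `p q` times the continuous bilinear pairing `∫ u v dλ` of the two curves. Hence it is `C²`,
and its mixed derivative at the origin is
`-p q ∫ (1/p) a f ^ (1/p - 1) · (1/q) b f ^ (1/q - 1) dλ = -∫ a b / f dλ`, as `1/p + 1/q = 1`.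
-/

open MeasureTheory

namespace ContinuousMap

variable {X : Type*} [TopologicalSpace X] [CompactSpace X]

theorem hasDerivAt_of_forall_hasDerivAt_apply {Φ G : ℝ → C(X, ℝ)} {U : Set ℝ}
    (hU : IsOpen U) (hG : ContinuousOn G U)
    (hΦ : ∀ t ∈ U, ∀ x, HasDerivAt (fun τ => Φ τ x) (G t x) t) {s : ℝ} (hs : s ∈ U) :
    HasDerivAt Φ (G s) s := by
  obtain ⟨δ, hδ, hball⟩ := Metric.isOpen_iff.1 hU s hs
  have hFTC : ∀ t ∈ Metric.ball s δ, Φ t = Φ s + ∫ τ in s..t, G τ := by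
    intro t ht
    have hsub : Set.uIcc s t ⊆ U := by
      rw [← segment_eq_uIcc]
      exact ((convex_ball s δ).segment_subset (Metric.mem_ball_self hδ) ht).trans hball
    ext x
    rw [add_apply, ← evalCLM_apply (R := ℝ) x (∫ τ in s..t, G τ),
      ← ContinuousLinearMap.intervalIntegral_comp_comm _ (hG.mono hsub).intervalIntegrable]
    simp only [evalCLM_apply]
    rw [intervalIntegral.integral_eq_sub_of_hasDerivAt (fun τ hτ => hΦ τ (hsub hτ) x)]
    · abel
    · exact ((evalCLM ℝ x).continuous.comp_continuousOn (hG.mono hsub)).intervalIntegrable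
  have hderiv := (intervalIntegral.integral_hasDerivAt_right (f := G) (a := s)
    IntervalIntegrable.refl (hG.stronglyMeasurableAtFilter hU s hs)
    (hG.continuousAt (hU.mem_nhds hs))).const_add (Φ s)
  exact hderiv.congr_of_eventuallyEq (Filter.eventually_of_mem (Metric.ball_mem_nhds s hδ) hFTC)

theorem exists_isOpen_forall_lt_add_mul {h : ℝ} {c : C(X, ℝ)} (hc : ∀ x, h < c x)
    (d : C(X, ℝ)) : ∃ U : Set ℝ, IsOpen U ∧ 0 ∈ U ∧ ∀ s ∈ U, ∀ x, h < c x + s * d x := by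
  obtain ⟨m, hm, hcm⟩ := isCompact_univ.exists_forall_le' c.continuous.continuousOn fun x _ => hc x
  refine ⟨{s | ‖s • d‖ < m - h}, isOpen_lt (by fun_prop) continuous_const, by simpa using hm,
    fun s hs x => ?_⟩
  have hsd := ((s • d).norm_coe_le_norm x).trans_lt hs
  rw [Real.norm_eq_abs, smul_apply, smul_eq_mul, abs_lt] at hsd
  linarith [hcm x trivial]

end ContinuousMap

noncomputable section TruncatedPower

/-- The cut-off at `h > 0` makes `y ↦ y ^ r` continuous for every exponent `r`; only its values
on `y > h` ever matter. -/
def truncRpow {h : ℝ} (hh : 0 < h) (r : ℝ) : C(ℝ, ℝ) :=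
  ⟨fun y => max h y ^ r, (continuous_const.max continuous_id).rpow_const
    fun y => Or.inl (hh.trans_le (le_max_left h y)).ne'⟩

theorem truncRpow_apply_of_le {h : ℝ} (hh : 0 < h) (r : ℝ) {y : ℝ} (hy : h ≤ y) :
    truncRpow hh r y = y ^ r := by
  simp [truncRpow, max_eq_right hy]

theorem hasDerivAt_truncRpow {h : ℝ} (hh : 0 < h) (r : ℝ) {y : ℝ} (hy : h < y) :
    HasDerivAt (truncRpow hh r) (r * truncRpow hh (r - 1) y) y := by
  have hev : (fun z => z ^ r) =ᶠ[nhds y] truncRpow hh r :=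
    Filter.eventually_of_mem (Ioi_mem_nhds hy) fun z hz =>
      (truncRpow_apply_of_le hh r (le_of_lt hz)).symm
  rw [truncRpow_apply_of_le hh _ hy.le]
  exact (Real.hasDerivAt_rpow_const (Or.inl (hh.trans hy).ne')).congr_of_eventuallyEq hev.symm

variable {X : Type*} [TopologicalSpace X]

def powCurve (c d : C(X, ℝ)) {h : ℝ} (hh : 0 < h) (r s : ℝ) : C(X, ℝ) :=
  (truncRpow hh r).comp (c + s • d)

theorem powCurve_apply_of_le {c d : C(X, ℝ)} {h : ℝ} (hh : 0 < h) (r s : ℝ) {x : X}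
    (hx : h ≤ c x + s * d x) : powCurve c d hh r s x = (c x + s * d x) ^ r :=
  truncRpow_apply_of_le hh r hx

variable [CompactSpace X]

theorem continuous_powCurve (c d : C(X, ℝ)) {h : ℝ} (hh : 0 < h) (r : ℝ) :
    Continuous (powCurve c d hh r) :=
  (ContinuousMap.continuous_postcomp _).comp (by fun_prop)

theorem hasDerivAt_powCurve {c d : C(X, ℝ)} {h : ℝ} (hh : 0 < h) (r : ℝ) {U : Set ℝ}
    (hU : IsOpen U) (hcd : ∀ s ∈ U, ∀ x, h < c x + s * d x) {s : ℝ} (hs : s ∈ U) :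
    HasDerivAt (powCurve c d hh r) (r • (d * powCurve c d hh (r - 1) s)) s := by
  refine ContinuousMap.hasDerivAt_of_forall_hasDerivAt_apply
    (G := fun τ => r • (d * powCurve c d hh (r - 1) τ)) hU
    ((continuous_const.mul (continuous_powCurve c d hh _)).const_smul r).continuousOn
    (fun t ht x => ?_) hs
  have hline : HasDerivAt (fun τ : ℝ => c x + τ * d x) (d x) t := by
    simpa using (hasDerivAt_mul_const (d x)).const_add (c x)
  refine ((hasDerivAt_truncRpow hh r (hcd t ht x)).comp t hline).congr_deriv ?_
  simp only [ContinuousMap.smul_apply, ContinuousMap.mul_apply, smul_eq_mul, powCurve,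
    ContinuousMap.comp_apply, ContinuousMap.add_apply]
  ring

theorem contDiffOn_powCurve {c d : C(X, ℝ)} {h : ℝ} (hh : 0 < h) {U : Set ℝ}
    (hU : IsOpen U) (hcd : ∀ s ∈ U, ∀ x, h < c x + s * d x) (n : ℕ) (r : ℝ) :
    ContDiffOn ℝ n (powCurve c d hh r) U := by
  induction n generalizing r with
  | zero => exact contDiffOn_zero.2 (continuous_powCurve c d hh r).continuousOn
  | succ n ih =>
    rw [Nat.cast_succ, contDiffOn_succ_iff_deriv_of_isOpen hU]
    refine ⟨fun s hs =>
      (hasDerivAt_powCurve hh r hU hcd hs).differentiableAt.differentiableWithinAt, by simp, ?_⟩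
    refine (((ContinuousLinearMap.mul ℝ C(X, ℝ) d).contDiff.comp_contDiffOn
      (ih (r - 1))).const_smul r).congr fun s hs => ?_
    simp [(hasDerivAt_powCurve hh r hU hcd hs).deriv]

end TruncatedPower

section Integral

variable {X : Type*} [TopologicalSpace X] [CompactSpace X] [MeasurableSpace X] [BorelSpace X]
  (μ : Measure X) [IsFiniteMeasure μ]

noncomputable def ContinuousMap.integralCLM : C(X, ℝ) →L[ℝ] ℝ :=
  L1.integralCLM.comp (ContinuousMap.toLp 1 μ ℝ)

theorem ContinuousMap.integralCLM_apply (u : C(X, ℝ)) :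
    ContinuousMap.integralCLM μ u = ∫ x, u x ∂μ := by
  rw [integralCLM, ContinuousLinearMap.comp_apply, ← L1.integral_eq, L1.integral_eq_integral]
  exact integral_congr_ae (ContinuousMap.coeFn_toLp μ u)

noncomputable def ContinuousMap.integralPairing : C(X, ℝ) →L[ℝ] C(X, ℝ) →L[ℝ] ℝ :=
  ContinuousLinearMap.compL ℝ C(X, ℝ) C(X, ℝ) ℝ (ContinuousMap.integralCLM μ) ∘L
    ContinuousLinearMap.mul ℝ C(X, ℝ)

theorem ContinuousMap.integralPairing_apply (u v : C(X, ℝ)) :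
    ContinuousMap.integralPairing μ u v = ∫ x, u x * v x ∂μ := by
  simp [integralPairing, integralCLM_apply]

theorem contDiff_integral_add_mul {f g : X → ℝ} (hf : Continuous f) (hg : Continuous g)
    {n : WithTop ℕ∞} : ContDiff ℝ n (fun t : ℝ => ∫ x, (f x + t * g x) ∂μ) := by
  have hint : ∀ u : X → ℝ, Continuous u → Integrable u μ := fun u hu =>
    hu.integrable_of_hasCompactSupport (HasCompactSupport.of_compactSpace u)
  have hsplit : (fun t : ℝ => ∫ x, (f x + t * g x) ∂μ)
      = fun t => (∫ x, f x ∂μ) + t * ∫ x, g x ∂μ := by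
    funext t
    rw [integral_add (hint f hf) ((hint g hg).const_mul t), integral_const_mul]
  rw [hsplit]
  fun_prop

variable {μ} {c d e : C(X, ℝ)} {h : ℝ} (hh : 0 < h)

theorem integral_rpow_mul_rpow_eq_integralPairing {s t : ℝ} (hs : ∀ x, h ≤ c x + s * d x)
    (ht : ∀ x, h ≤ c x + t * e x) (r r' : ℝ) :
    ∫ x, (c x + s * d x) ^ r * (c x + t * e x) ^ r' ∂μ
      = ContinuousMap.integralPairing μ (powCurve c d hh r s) (powCurve c e hh r' t) := by
  rw [ContinuousMap.integralPairing_apply]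
  congr 1 with x
  rw [powCurve_apply_of_le hh _ _ (hs x), powCurve_apply_of_le hh _ _ (ht x)]

theorem integralPairing_deriv_powCurve_zero (hc : ∀ x, h ≤ c x) (r r' : ℝ) :
    ContinuousMap.integralPairing μ (r • (d * powCurve c d hh (r - 1) 0))
        (r' • (e * powCurve c e hh (r' - 1) 0))
      = r * r' * ∫ x, d x * e x * c x ^ (r + r' - 2) ∂μ := by
  have hc0 : ∀ (d : C(X, ℝ)) x, h ≤ c x + 0 * d x := fun d x => by simpa using hc x
  rw [ContinuousMap.integralPairing_apply, ← integral_const_mul]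
  congr 1 with x
  simp only [ContinuousMap.smul_apply, ContinuousMap.mul_apply, smul_eq_mul,
    powCurve_apply_of_le hh _ _ (hc0 d x), powCurve_apply_of_le hh _ _ (hc0 e x), zero_mul,
    add_zero]
  rw [show r + r' - 2 = (r - 1) + (r' - 1) by ring,
    Real.rpow_add (hh.trans_le (hc x))]
  ring

end Integral

section MixedDerivative

variable {E F : Type*} [NormedAddCommGroup E] [NormedSpace ℝ E] [NormedAddCommGroup F]
  [NormedSpace ℝ F]

theorem deriv_deriv_eq_of_eventuallyEq {D D' : ℝ → ℝ → E} {a b : ℝ}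
    (h : ∀ᶠ st in nhds (a, b), D st.1 st.2 = D' st.1 st.2) :
    deriv (fun s => deriv (fun t => D s t) b) a = deriv (fun s => deriv (fun t => D' s t) b) a := by
  rw [nhds_prod_eq] at h
  refine Filter.EventuallyEq.deriv_eq ?_
  filter_upwards [h.curry] with s hs
  exact Filter.EventuallyEq.deriv_eq hs

variable (B : E →L[ℝ] F →L[ℝ] ℝ) {g h : ℝ → ℝ} {φ : ℝ → E} {ψ : ℝ → F}

theorem contDiffOn_add_add_sub_bilinear {U V : Set ℝ} {n : WithTop ℕ∞} (hh : ContDiff ℝ n h)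
    (hg : ContDiff ℝ n g) (hφ : ContDiffOn ℝ n φ U) (hψ : ContDiffOn ℝ n ψ V) :
    ContDiffOn ℝ n (fun st : ℝ × ℝ => h st.2 + g st.1 - B (φ st.1) (ψ st.2)) (U ×ˢ V) := by
  refine ((hh.comp contDiff_snd).add (hg.comp contDiff_fst)).contDiffOn.sub ?_
  exact (B.contDiff.comp_contDiffOn (hφ.comp contDiff_fst.contDiffOn fun _ hst => hst.1)).clm_apply
    (hψ.comp contDiff_snd.contDiffOn fun _ hst => hst.2)

theorem deriv_deriv_add_add_sub_bilinear {a b : ℝ} {φ' : E} {ψ' : F}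
    (hh : DifferentiableAt ℝ h b) (hφ : HasDerivAt φ φ' a) (hψ : HasDerivAt ψ ψ' b) :
    deriv (fun s => deriv (fun t => h t + g s - B (φ s) (ψ t)) b) a = -B φ' ψ' := by
  have hinner : ∀ s, deriv (fun t => h t + g s - B (φ s) (ψ t)) b
      = deriv h b - B.flip ψ' (φ s) := fun s =>
    ((hh.hasDerivAt.add_const (g s)).sub ((B (φ s)).hasFDerivAt.comp_hasDerivAt b hψ)).deriv
  simp_rw [hinner]
  exact ((hasDerivAt_const a (deriv h b)).sub
    ((B.flip ψ').hasFDerivAt.comp_hasDerivAt a hφ)).deriv.trans (zero_sub _)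

end MixedDerivative

/-- The negative mixed second derivative of the α-divergence
`D(u,v) = p∫v + q∫u − p·q·∫ u^{1/p} v^{1/q} dλ` along the diagonal at a positive
continuous density `f` equals the Fisher–Rao metric `∫ a·b/f dλ`. -/
theorem stmt_1 {M : Type*} [MetricSpace M] [CompactSpace M] [MeasurableSpace M] [BorelSpace M]
    (lam : Measure M) [IsFiniteMeasure lam]
    (p q : ℝ) (hp : 1 < p) (hpq : 1 / p + 1 / q = 1)
    (f a b : M → ℝ) (hf : Continuous f) (ha : Continuous a) (hb : Continuous b)
    (hfpos : ∀ x, 0 < f x) :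
    (∃ U ∈ nhds ((0 : ℝ), (0 : ℝ)), ContDiffOn ℝ 2
        (fun st : ℝ × ℝ =>
          p * ∫ x, (f x + st.2 * b x) ∂lam + q * ∫ x, (f x + st.1 * a x) ∂lam
            - p * q * ∫ x, (f x + st.1 * a x) ^ (1 / p) * (f x + st.2 * b x) ^ (1 / q) ∂lam)
        U) ∧
    - deriv (fun s => deriv (fun t =>
          p * ∫ x, (f x + t * b x) ∂lam + q * ∫ x, (f x + s * a x) ∂lam
            - p * q * ∫ x, (f x + s * a x) ^ (1 / p) * (f x + t * b x) ^ (1 / q) ∂lam) 0) 0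
      = ∫ x, a x * b x / f x ∂lam := by
  obtain ⟨m, hm, hfm⟩ := isCompact_univ.exists_forall_le' hf.continuousOn fun x _ => hfpos x
  have hm2 : 0 < m / 2 := half_pos hm
  set fc : C(M, ℝ) := ⟨f, hf⟩
  have hfc : ∀ x, m / 2 < fc x := fun x => (half_lt_self hm).trans_le (hfm x trivial)
  obtain ⟨Us, hUs, hUs0, hUspos⟩ := ContinuousMap.exists_isOpen_forall_lt_add_mul hfc ⟨a, ha⟩
  obtain ⟨Ut, hUt, hUt0, hUtpos⟩ := ContinuousMap.exists_isOpen_forall_lt_add_mul hfc ⟨b, hb⟩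
  have hU : Us ×ˢ Ut ∈ nhds (0, 0) := prod_mem_nhds (hUs.mem_nhds hUs0) (hUt.mem_nhds hUt0)
  set B := (p * q) • ContinuousMap.integralPairing lam
  have hEq : ∀ st ∈ Us ×ˢ Ut,
      p * q * ∫ x, (f x + st.1 * a x) ^ (1 / p) * (f x + st.2 * b x) ^ (1 / q) ∂lam
        = B (powCurve fc ⟨a, ha⟩ hm2 (1 / p) st.1) (powCurve fc ⟨b, hb⟩ hm2 (1 / q) st.2) :=
    fun st hst => congrArg (p * q * ·) (integral_rpow_mul_rpow_eq_integralPairing hm2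
      (fun x => (hUspos _ hst.1 x).le) (fun x => (hUtpos _ hst.2 x).le) _ _)
  have hlin : ContDiff ℝ 2 (fun t => p * ∫ x, (f x + t * b x) ∂lam) :=
    contDiff_const.mul (contDiff_integral_add_mul lam hf hb)
  refine ⟨⟨Us ×ˢ Ut, hU, (contDiffOn_add_add_sub_bilinear B hlin
    ((contDiff_const (c := q)).mul (contDiff_integral_add_mul lam hf ha))
    (contDiffOn_powCurve hm2 hUs hUspos 2 (1 / p))
    (contDiffOn_powCurve hm2 hUt hUtpos 2 (1 / q))).congr fun st hst => by rw [hEq st hst]⟩, ?_⟩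
  have hpq' : p.HolderConjugate q :=
    Real.holderConjugate_iff.2 ⟨hp, by simpa only [one_div] using hpq⟩
  have hcoef : p * q * (1 / p * (1 / q)) = 1 := by field_simp [hpq'.ne_zero, hpq'.symm.ne_zero]
  have hmixed := deriv_deriv_add_add_sub_bilinear B
    (g := fun s => q * ∫ x, (f x + s * a x) ∂lam) (hlin.differentiable two_ne_zero 0)
    (hasDerivAt_powCurve hm2 (1 / p) hUs hUspos hUs0)
    (hasDerivAt_powCurve hm2 (1 / q) hUt hUtpos hUt0)
  rw [(deriv_deriv_eq_of_eventuallyEq (Filter.eventually_of_mem hU fun st hst => by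
      rw [hEq st hst])).trans hmixed, neg_neg, smul_apply, smul_apply,
    integralPairing_deriv_powCurve_zero hm2 (fun x => (hfc x).le), hpq, smul_eq_mul, ← mul_assoc,
    hcoef, one_mul]
  congr 1 with x
  norm_num [fc, Real.rpow_neg_one, div_eq_mul_inv]
end

section
/- Let M be a compact metric space, λ a finite Borel measure on M, and p ∈ (1, ∞). Let f : [0,1] × M → (0, ∞) be continuous with continuous partial derivative ∂_t f. Then the curve c(t) := f(t, ·)^{1/p}, regarded as a curve in the Banach space L^p(λ), is continuously differentiable with derivative c′(t) = (1/p)·∂_t f(t, ·)·f(t, ·)^{1/p − 1}, and for every t ∈ [0,1] one has ‖c′(t)‖_{L^p(λ)} = (1/p)·F_p(f(t,·), ∂_t f(t,·)), where F_p(f, a) := (∫_M |a(x)/f(x)|^p f(x) dλ(x))^{1/p}. -/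
open MeasureTheory

/-- The `L^p`-Fisher–Rao metric `F_p(f, a) = (∫ |a/f|^p f dλ)^{1/p}`. -/
noncomputable def Fp {M : Type*} [MeasurableSpace M] (lam : Measure M) (p : ℝ)
    (f a : M → ℝ) : ℝ :=
  (∫ x, |a x / f x| ^ p * f x ∂lam) ^ (1 / p)

/-!
The curve `t ↦ f(t,·)^{1/p}` is first shown to be `C¹` in `C(M, ℝ)` with the sup norm: its
pointwise derivative `(1/p) ∂ₜf f^{1/p-1}` is jointly continuous on the compact set
`[0,1] × M`, so as a curve in `C(M, ℝ)` it is continuous, and the mean value theorem applied at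
each point `x`, with a bound uniform in `x`, upgrades the pointwise derivatives to a derivative
in sup norm. The bounded linear map `C(M, ℝ) → L^p(λ)` transports this to `L^p(λ)`. The norm
identity is the pointwise computation `|a f^{1/p-1}|^p = |a/f|^p f`.
-/

open Set

section CurryIccExtend

variable {α M Z : Type*} [LinearOrder α] [TopologicalSpace α] [OrderTopology α]
  [TopologicalSpace M] [TopologicalSpace Z] {a b : α} {g : α × M → Z}

noncomputable def ContinuousOn.curryIccExtend (hab : a ≤ b)
    (hg : ContinuousOn g (Icc a b ×ˢ univ)) : C(α, C(M, Z)) :=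
  ContinuousMap.curry
    ⟨fun q => g (projIcc a b hab q.1, q.2),
      hg.comp_continuous (by fun_prop) fun q => ⟨(projIcc a b hab q.1).2, trivial⟩⟩

theorem ContinuousOn.curryIccExtend_apply (hab : a ≤ b) (hg : ContinuousOn g (Icc a b ×ˢ univ))
    {t : α} (ht : t ∈ Icc a b) (x : M) : hg.curryIccExtend hab t x = g (t, x) := by
  simp [ContinuousOn.curryIccExtend, projIcc_of_mem hab ht]

end CurryIccExtend

theorem ContinuousMap.hasDerivWithinAt_of_hasDerivWithinAt_apply {M E : Type*}
    [TopologicalSpace M] [CompactSpace M] [NormedAddCommGroup E] [NormedSpace ℝ E]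
    {F F' : ℝ → C(M, E)} {s : Set ℝ} {t : ℝ} (hs : Convex ℝ s) (ht : t ∈ s)
    (hF' : ContinuousWithinAt F' s t)
    (hF : ∀ x, ∀ u ∈ s, HasDerivWithinAt (fun v => F v x) (F' u x) s u) :
    HasDerivWithinAt F (F' t) s t := by
  rw [hasDerivWithinAt_iff_isLittleO, Asymptotics.isLittleO_iff]
  intro ε hε
  obtain ⟨δ, hδ, hclose⟩ := Metric.continuousWithinAt_iff.1 hF' ε hε
  have hconv : Convex ℝ (s ∩ Metric.ball t δ) := hs.inter (convex_ball t δ)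
  have ht' : t ∈ s ∩ Metric.ball t δ := ⟨ht, Metric.mem_ball_self hδ⟩
  filter_upwards [inter_mem_nhdsWithin s (Metric.ball_mem_nhds t hδ)] with v hv
  refine (ContinuousMap.norm_le _ (by positivity)).2 fun x => ?_
  -- mean value theorem on the convex set `s ∩ ball t δ`, where `F' u` stays `ε`-close to `F' t`
  have hderiv : ∀ u ∈ s ∩ Metric.ball t δ, HasDerivWithinAt (fun u => F u x - u • F' t x)
      (F' u x - F' t x) (s ∩ Metric.ball t δ) u := fun u hu => by
    simpa using ((hF x u hu.1).mono inter_subset_left).fun_sub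
      ((hasDerivWithinAt_id u _).smul_const (F' t x))
  have hbound : ∀ u ∈ s ∩ Metric.ball t δ, ‖F' u x - F' t x‖ ≤ ε := fun u hu =>
    ((F' u - F' t).norm_coe_le_norm x).trans
      (dist_eq_norm (F' u) (F' t) ▸ (hclose hu.1 hu.2).le)
  have := hconv.norm_image_sub_le_of_norm_hasDerivWithin_le hderiv hbound ht' hv
  simpa [sub_smul, sub_sub_sub_comm, sub_right_comm] using this

theorem Fp_const_mul {M : Type*} [MeasurableSpace M] {lam : Measure M} {p : ℝ} (hp : 0 < p)
    {f : M → ℝ} (hf : ∀ x, 0 ≤ f x) (a : M → ℝ) {c : ℝ} (hc : 0 ≤ c) :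
    Fp lam p f (fun x => c * a x) = c * Fp lam p f a := by
  have hint : ∀ x, |c * a x / f x| ^ p * f x = c ^ p * (|a x / f x| ^ p * f x) := fun x => by
    rw [mul_div_assoc, abs_mul, abs_of_nonneg hc, Real.mul_rpow hc (abs_nonneg _), mul_assoc]
  simp only [Fp, hint, integral_const_mul]
  rw [Real.mul_rpow (by positivity)
      (integral_nonneg fun x => mul_nonneg (by positivity) (hf x)),
    ← Real.rpow_mul hc, mul_one_div_cancel hp.ne', Real.rpow_one]

theorem abs_mul_rpow_sub_one_rpow {p y : ℝ} (hp : 0 < p) (hy : 0 < y) (a : ℝ) :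
    |a * y ^ (1 / p - 1)| ^ p = |a / y| ^ p * y := by
  rw [abs_mul, abs_of_pos (Real.rpow_pos_of_pos hy _), Real.mul_rpow (abs_nonneg _)
      (Real.rpow_nonneg hy.le _), ← Real.rpow_mul hy.le, sub_mul, one_div_mul_cancel hp.ne',
    one_mul, Real.rpow_sub hy, Real.rpow_one, abs_div, abs_of_pos hy,
    Real.div_rpow (abs_nonneg _) hy.le]
  field_simp

theorem Lp.norm_eq_Fp {M : Type*} [MeasurableSpace M] {lam : Measure M} {p : ℝ} (hp : 0 < p)
    [Fact (1 ≤ ENNReal.ofReal p)] {f a : M → ℝ} (hf : ∀ᵐ x ∂lam, 0 < f x)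
    (u : Lp ℝ (ENNReal.ofReal p) lam) (hu : u =ᵐ[lam] fun x => a x * f x ^ (1 / p - 1)) :
    ‖u‖ = Fp lam p f a := by
  have hmem := (Lp.memLp u).ae_eq hu
  rw [Lp.norm_def, eLpNorm_congr_ae hu,
    hmem.eLpNorm_eq_integral_rpow_norm (by simpa using hp) ENNReal.ofReal_ne_top,
    ENNReal.toReal_ofReal (by positivity), ENNReal.toReal_ofReal hp.le, Fp, ← one_div]
  congr 1
  refine integral_congr_ae (hf.mono fun x hx => ?_)
  simp only [Real.norm_eq_abs, abs_mul_rpow_sub_one_rpow hp hx]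

/-- The `p`-root transform is an isometric embedding (infinitesimal form): for a `C¹` path
of positive densities `t ↦ f(t,·)`, the curve `c(t) = f(t,·)^{1/p}` in `L^p(λ)` is
continuously differentiable with derivative `c′(t) = (1/p)·∂_t f·f^{1/p−1}`, and
`‖c′(t)‖_{L^p} = (1/p)·F_p(f(t,·), ∂_t f(t,·))`. -/
theorem stmt_3 {M : Type*} [MetricSpace M] [CompactSpace M] [MeasurableSpace M] [BorelSpace M]
    (lam : Measure M) [IsFiniteMeasure lam]
    (p : ℝ) (hp : 1 < p) [Fact (1 ≤ ENNReal.ofReal p)]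
    (f f' : ℝ → M → ℝ)
    (hf_cont : ContinuousOn (fun q : ℝ × M => f q.1 q.2) (Set.Icc 0 1 ×ˢ Set.univ))
    (hf_pos : ∀ t ∈ Set.Icc (0 : ℝ) 1, ∀ x, 0 < f t x)
    (hf'_cont : ContinuousOn (fun q : ℝ × M => f' q.1 q.2) (Set.Icc 0 1 ×ˢ Set.univ))
    (hf_deriv : ∀ x, ∀ t ∈ Set.Icc (0 : ℝ) 1,
      HasDerivWithinAt (fun s => f s x) (f' t x) (Set.Icc 0 1) t) :
    ∃ c c' : ℝ → Lp ℝ (ENNReal.ofReal p) lam,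
      (∀ t ∈ Set.Icc (0 : ℝ) 1, ⇑(c t) =ᵐ[lam] fun x => f t x ^ (1 / p)) ∧
      (∀ t ∈ Set.Icc (0 : ℝ) 1,
        ⇑(c' t) =ᵐ[lam] fun x => (1 / p) * f' t x * f t x ^ (1 / p - 1)) ∧
      (∀ t ∈ Set.Icc (0 : ℝ) 1, HasDerivWithinAt c (c' t) (Set.Icc 0 1) t) ∧
      ContinuousOn c' (Set.Icc 0 1) ∧
      (∀ t ∈ Set.Icc (0 : ℝ) 1, ‖c' t‖ = (1 / p) * Fp lam p (f t) (f' t)) := by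
  have hp0 : 0 < p := zero_lt_one.trans hp
  have hf_ne (q) (hq : q ∈ Icc (0 : ℝ) 1 ×ˢ (univ : Set M)) : f q.1 q.2 ≠ 0 :=
    (hf_pos _ hq.1 _).ne'
  have hroot := hf_cont.rpow_const (p := 1 / p) fun q hq => Or.inl (hf_ne q hq)
  have hroot' : ContinuousOn (fun q : ℝ × M => 1 / p * f' q.1 q.2 * f q.1 q.2 ^ (1 / p - 1))
      (Icc 0 1 ×ˢ univ) := (continuousOn_const.mul hf'_cont).mul
    (hf_cont.rpow_const (p := 1 / p - 1) fun q hq => Or.inl (hf_ne q hq))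
  set F := hroot.curryIccExtend zero_le_one
  set F' := hroot'.curryIccExtend zero_le_one
  set T := ContinuousMap.toLp (E := ℝ) (ENNReal.ofReal p) lam ℝ
  have hF'_ae (t) (ht : t ∈ Icc (0 : ℝ) 1) :
      ⇑(T (F' t)) =ᵐ[lam] fun x => 1 / p * f' t x * f t x ^ (1 / p - 1) :=
    (ContinuousMap.coeFn_toLp lam _).trans
      (ae_of_all _ (hroot'.curryIccExtend_apply zero_le_one ht))
  refine ⟨fun t => T (F t), fun t => T (F' t), fun t ht => ?_, hF'_ae, fun t ht => ?_,
    (T.continuous.comp F'.continuous).continuousOn, fun t ht => ?_⟩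
  · exact (ContinuousMap.coeFn_toLp lam _).trans
      (ae_of_all _ (hroot.curryIccExtend_apply zero_le_one ht))
  · refine T.hasFDerivAt.comp_hasDerivWithinAt t
      (ContinuousMap.hasDerivWithinAt_of_hasDerivWithinAt_apply (convex_Icc 0 1) ht
        F'.continuous.continuousWithinAt fun x u hu => ?_)
    have hpow := (hf_deriv x u hu).rpow_const (p := 1 / p) (Or.inl (hf_pos u hu x).ne')
    rw [hroot'.curryIccExtend_apply zero_le_one hu]
    convert hpow.congr_of_mem (fun v hv => hroot.curryIccExtend_apply zero_le_one hv x) hu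
      using 1
    ring
  · rw [Lp.norm_eq_Fp hp0 (ae_of_all _ (hf_pos t ht)) _ (hF'_ae t ht),
      Fp_const_mul hp0 (fun x => (hf_pos t ht x).le) _ (by positivity)]
end

section
/- Let M be a compact metric space, λ a finite Borel measure on M, and p ∈ (1, ∞). Let f : [0,1] × M → (0, ∞) be continuous with continuous partial derivative ∂_t f. Then ∫_0^1 F_p(f(t,·), ∂_t f(t,·)) dt ≥ p·‖f(1,·)^{1/p} − f(0,·)^{1/p}‖_{L^p(λ)}, where F_p(f, a) := (∫_M |a(x)/f(x)|^p f(x) dλ(x))^{1/p}. -/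
/-!
With `g = f ^ (1/p)` one has `∂ₜg = (1/p) f ^ (1/p - 1) ∂ₜf`, and the integrand of
`F_p(f, ∂ₜf)` is pointwise `p ^ p |∂ₜg| ^ p`, so `F_p(f(t), ∂ₜf(t)) = p ‖∂ₜg(t)‖_p`.
Since `g(1) - g(0) = ∫₀¹ ∂ₜg dt`, the claim is Minkowski's integral inequality
`‖∫ F t dt‖_p ≤ ∫ ‖F t‖_p dt`. That is proved by duality: for `h = |∫ F t dt|`,
`∫ h ^ p ≤ ∫∫ |F t| h ^ (p-1)`, and after Fubini, Hölder in the space variable bounds the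
inner integral by `‖F t‖_p ‖h‖_p ^ (p-1)`.
-/

open MeasureTheory

open Set Function

theorem rpow_one_div_le_of_le_mul_rpow_one_sub {p B N : ℝ} (hp : 0 < p) (hB : 0 ≤ B)
    (hN : 0 ≤ N) (h : B ≤ N * B ^ (1 - 1 / p)) : B ^ (1 / p) ≤ N := by
  rcases hB.eq_or_lt with rfl | hB
  · rwa [Real.zero_rpow (by positivity)]
  · refine le_of_mul_le_mul_right ?_ (Real.rpow_pos_of_pos hB (1 - 1 / p))
    rwa [← Real.rpow_add hB, add_sub_cancel, Real.rpow_one]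

section Minkowski

variable {α β : Type*} [MeasurableSpace α] [MeasurableSpace β]
  {ν : Measure α} {μ : Measure β}

theorem integral_mul_rpow_sub_one_le {p : ℝ} (hp : 1 < p) {G h : β → ℝ}
    (hG : 0 ≤ᵐ[μ] G) (hh : 0 ≤ h) (hGp : MemLp G (ENNReal.ofReal p) μ)
    (hhp : MemLp h (ENNReal.ofReal p) μ) :
    ∫ x, G x * h x ^ (p - 1) ∂μ ≤
      (∫ x, G x ^ p ∂μ) ^ (1 / p) * (∫ x, h x ^ p ∂μ) ^ (1 - 1 / p) := by
  have hp1 : 0 < p - 1 := by linarith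
  have hq : MemLp (fun x => h x ^ (p - 1)) (ENNReal.ofReal (p / (p - 1))) μ := by
    rw [ENNReal.ofReal_div_of_pos hp1]
    simpa [Real.norm_eq_abs, abs_of_nonneg (hh _), ENNReal.toReal_ofReal hp1.le] using
      hhp.norm_rpow_div (ENNReal.ofReal (p - 1))
  convert integral_mul_le_Lp_mul_Lq_of_nonneg (Real.HolderConjugate.conjExponent hp) hG
    (ae_of_all _ fun x => Real.rpow_nonneg (hh x) _) hGp hq using 3
  · refine integral_congr_ae (ae_of_all _ fun x => ?_)
    dsimp only
    rw [← Real.rpow_mul (hh x), Real.conjExponent, mul_div_cancel₀ _ hp1.ne']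
  · rw [Real.conjExponent]
    field_simp

variable [IsFiniteMeasure ν] [IsFiniteMeasure μ]

theorem integrable_rpow_integral_abs_rpow {p : ℝ} (hp : 0 < p) {F : α → β → ℝ}
    (hF : AEStronglyMeasurable (uncurry F) (ν.prod μ)) {C : ℝ}
    (hC : ∀ᵐ t ∂ν, ∀ x, |F t x| ≤ C) :
    Integrable (fun t => (∫ x, |F t x| ^ p ∂μ) ^ (1 / p)) ν := by
  refine Integrable.of_bound ?_ ((|C| ^ p * μ.real univ) ^ (1 / p)) (hC.mono fun t ht => ?_)
  · exact ((hF.norm.aemeasurable.pow_const p).aestronglyMeasurable.integral_prod_right'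
      |>.aemeasurable.pow_const _).aestronglyMeasurable
  have hint : ∫ x, |F t x| ^ p ∂μ ≤ |C| ^ p * μ.real univ := by
    refine (Real.le_norm_self _).trans
      (norm_integral_le_of_norm_le_const (ae_of_all _ fun x => ?_))
    rw [Real.norm_of_nonneg (by positivity)]
    exact Real.rpow_le_rpow (abs_nonneg _) ((ht x).trans (le_abs_self C)) hp.le
  rw [Real.norm_of_nonneg (by positivity)]
  exact Real.rpow_le_rpow (by positivity) hint (by positivity)

theorem rpow_integral_abs_integral_rpow_le {p : ℝ} (hp : 1 < p) {F : α → β → ℝ}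
    (hF : AEStronglyMeasurable (uncurry F) (ν.prod μ)) {C : ℝ}
    (hC : ∀ᵐ t ∂ν, ∀ x, |F t x| ≤ C) :
    (∫ x, |∫ t, F t x ∂ν| ^ p ∂μ) ^ (1 / p) ≤
      ∫ t, (∫ x, |F t x| ^ p ∂μ) ^ (1 / p) ∂ν := by
  have hp0 : 0 < p := by linarith
  set h : β → ℝ := fun x => |∫ t, F t x ∂ν|
  set B := ∫ x, h x ^ p ∂μ
  have hh0 : 0 ≤ h := fun x => abs_nonneg _
  have hh_bdd : ∀ x, h x ≤ C * ν.real univ := fun x => by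
    simpa only [Real.norm_eq_abs] using norm_integral_le_of_norm_le_const (f := fun t => F t x)
      (hC.mono fun t ht => by simpa only [Real.norm_eq_abs] using ht x)
  have hh_meas : AEStronglyMeasurable h μ := hF.prod_swap.integral_prod_right'.norm
  have hh_mem : MemLp h (ENNReal.ofReal p) μ :=
    MemLp.of_bound hh_meas _ (ae_of_all _ fun x => by
      rw [Real.norm_eq_abs, abs_of_nonneg (hh0 x)]; exact hh_bdd x)
  have hΦ : Integrable (uncurry fun x t => |F t x| * h x ^ (p - 1)) (μ.prod ν) := by
    refine Integrable.of_bound ?_ (C * (C * ν.real univ) ^ (p - 1)) ?_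
    · exact hF.prod_swap.norm.mul (hh_meas.comp_fst.aemeasurable.pow_const _).aestronglyMeasurable
    filter_upwards [Measure.quasiMeasurePreserving_snd.ae hC] with z hz
    rw [uncurry_apply_pair, Real.norm_of_nonneg (by positivity)]
    exact mul_le_mul (hz z.1) (Real.rpow_le_rpow (hh0 _) (hh_bdd _) (by linarith))
      (by positivity) ((abs_nonneg _).trans (hz z.1))
  have hHolder : ∀ᵐ t ∂ν, ∫ x, |F t x| * h x ^ (p - 1) ∂μ
      ≤ (∫ x, |F t x| ^ p ∂μ) ^ (1 / p) * B ^ (1 - 1 / p) := by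
    filter_upwards [hF.prodMk_left, hC] with t hFt hCt
    exact integral_mul_rpow_sub_one_le hp (ae_of_all _ fun x => abs_nonneg _) hh0
      (MemLp.of_bound hFt.norm C (ae_of_all _ fun x => by simpa using hCt x)) hh_mem
  refine rpow_one_div_le_of_le_mul_rpow_one_sub hp0 (by positivity) (by positivity) ?_
  calc B ≤ ∫ x, ∫ t, |F t x| * h x ^ (p - 1) ∂ν ∂μ := by
        refine integral_mono_of_nonneg (ae_of_all _ fun x => by positivity)
          hΦ.integral_prod_left (ae_of_all _ fun x => ?_)
        have hsplit : h x ^ p = h x * h x ^ (p - 1) := by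
          simpa [mul_comm] using Real.rpow_add_one' (hh0 x) (y := p - 1) (by simpa using hp0.ne')
        dsimp only
        rw [integral_mul_const, hsplit]
        exact mul_le_mul_of_nonneg_right abs_integral_le_integral_abs (by positivity)
    _ = ∫ t, ∫ x, |F t x| * h x ^ (p - 1) ∂μ ∂ν := integral_integral_swap hΦ
    _ ≤ ∫ t, (∫ x, |F t x| ^ p ∂μ) ^ (1 / p) * B ^ (1 - 1 / p) ∂ν :=
        integral_mono_ae hΦ.integral_prod_right
          ((integrable_rpow_integral_abs_rpow hp0 hF hC).mul_const _) hHolder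
    _ = (∫ t, (∫ x, |F t x| ^ p ∂μ) ^ (1 / p) ∂ν) * B ^ (1 - 1 / p) :=
        integral_mul_const _ _

end Minkowski

theorem rpow_sub_rpow_eq_integral {u u' : ℝ → ℝ} {a b : ℝ} (r : ℝ) (hab : a ≤ b)
    (hu : ∀ t ∈ Icc a b, HasDerivWithinAt u (u' t) (Icc a b) t)
    (hu' : ContinuousOn u' (Icc a b)) (hpos : ∀ t ∈ Icc a b, 0 < u t) :
    u b ^ r - u a ^ r = ∫ t in a..b, r * u t ^ (r - 1) * u' t := by
  have hu_cont : ContinuousOn u (Icc a b) := fun t ht => (hu t ht).continuousWithinAt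
  refine (intervalIntegral.integral_eq_sub_of_hasDerivAt_of_le hab
    (hu_cont.rpow_const fun t ht => Or.inl (hpos t ht).ne') (fun t ht => ?_) ?_).symm
  · have ht' := Ioo_subset_Icc_self ht
    exact (((hu t ht').hasDerivAt (Icc_mem_nhds ht.1 ht.2)).rpow_const
      (Or.inl (hpos t ht').ne')).congr_deriv (by ring)
  · exact (((hu_cont.rpow_const fun t ht => Or.inl (hpos t ht).ne').const_smul r).mul
      hu').intervalIntegrable_of_Icc hab

theorem abs_div_rpow_mul_eq {p y : ℝ} (hp : 0 < p) (hy : 0 < y) (a : ℝ) :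
    |a / y| ^ p * y = p ^ p * |1 / p * y ^ (1 / p - 1) * a| ^ p := by
  have hlhs : |a / y| ^ p * y = y ^ (1 - p) * |a| ^ p := by
    rw [abs_div, abs_of_pos hy, Real.div_rpow (abs_nonneg a) hy.le, Real.rpow_sub hy,
      Real.rpow_one]
    ring
  have hrhs : |1 / p * y ^ (1 / p - 1) * a| ^ p = (1 / p) ^ p * (y ^ (1 - p) * |a| ^ p) := by
    have hexp : (1 / p - 1) * p = 1 - p := by field_simp
    rw [abs_mul, abs_mul, abs_of_pos (by positivity), abs_of_pos (by positivity),
      Real.mul_rpow (by positivity) (abs_nonneg a), Real.mul_rpow (by positivity) (by positivity),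
      ← Real.rpow_mul hy.le, hexp, mul_assoc]
  rw [hlhs, hrhs, ← mul_assoc, ← Real.mul_rpow hp.le (by positivity), mul_one_div_cancel hp.ne',
    Real.one_rpow, one_mul]

theorem Fp_eq_mul_rpow_integral {M : Type*} [MeasurableSpace M] (lam : Measure M) {p : ℝ} (hp : 0 < p)
    {f : M → ℝ} (hf : ∀ x, 0 < f x) (a : M → ℝ) :
    Fp lam p f a = p * (∫ x, |1 / p * f x ^ (1 / p - 1) * a x| ^ p ∂lam) ^ (1 / p) := by
  rw [Fp, integral_congr_ae (ae_of_all _ fun x => abs_div_rpow_mul_eq hp (hf x) (a x)),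
    integral_const_mul, Real.mul_rpow (by positivity)
      (integral_nonneg fun x => Real.rpow_nonneg (abs_nonneg _) _),
    ← Real.rpow_mul hp.le, mul_one_div_cancel hp.ne', Real.rpow_one]

/-- Lower bound for the `F_p`-length of a path of positive densities:
`∫₀¹ F_p(f(t,·), ∂_t f(t,·)) dt ≥ p·‖f(1,·)^{1/p} − f(0,·)^{1/p}‖_{L^p(λ)}`. -/
theorem stmt_4 {M : Type*} [MetricSpace M] [CompactSpace M] [MeasurableSpace M] [BorelSpace M]
    (lam : Measure M) [IsFiniteMeasure lam]
    (p : ℝ) (hp : 1 < p)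
    (f f' : ℝ → M → ℝ)
    (hf_cont : ContinuousOn (fun q : ℝ × M => f q.1 q.2) (Set.Icc 0 1 ×ˢ Set.univ))
    (hf_pos : ∀ t ∈ Set.Icc (0 : ℝ) 1, ∀ x, 0 < f t x)
    (hf'_cont : ContinuousOn (fun q : ℝ × M => f' q.1 q.2) (Set.Icc 0 1 ×ˢ Set.univ))
    (hf_deriv : ∀ x, ∀ t ∈ Set.Icc (0 : ℝ) 1,
      HasDerivWithinAt (fun s => f s x) (f' t x) (Set.Icc 0 1) t) :
    p * (∫ x, |f 1 x ^ (1 / p) - f 0 x ^ (1 / p)| ^ p ∂lam) ^ (1 / p)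
      ≤ ∫ t in (0 : ℝ)..1, Fp lam p (f t) (f' t) := by
  have hp0 : 0 < p := by linarith
  set D : ℝ → M → ℝ := fun t x => 1 / p * f t x ^ (1 / p - 1) * f' t x
  have hD : ContinuousOn (uncurry D) (Icc 0 1 ×ˢ univ) :=
    (continuousOn_const.mul (hf_cont.rpow_const fun q hq => Or.inl (hf_pos _ hq.1 _).ne')).mul
      hf'_cont
  obtain ⟨C, hC⟩ := (isCompact_Icc.prod isCompact_univ).exists_bound_of_continuousOn hD
  set ν := volume.restrict (Ioc (0 : ℝ) 1)
  have hD_meas : AEStronglyMeasurable (uncurry D) (ν.prod lam) := by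
    rw [Measure.restrict_prod_eq_prod_univ]
    exact (hD.mono (prod_mono Ioc_subset_Icc_self subset_rfl)).aestronglyMeasurable
      (measurableSet_Ioc.prod MeasurableSet.univ)
  have hD_bdd : ∀ᵐ t ∂ν, ∀ x, |D t x| ≤ C :=
    (ae_restrict_iff' measurableSet_Ioc).2 (ae_of_all _ fun t ht x =>
      hC (t, x) ⟨Ioc_subset_Icc_self ht, mem_univ x⟩)
  have hFTC : ∀ x, ∫ t, D t x ∂ν = f 1 x ^ (1 / p) - f 0 x ^ (1 / p) := fun x => by
    rw [← intervalIntegral.integral_of_le zero_le_one, rpow_sub_rpow_eq_integral _ zero_le_one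
      (hf_deriv x) (hf'_cont.comp (continuousOn_id.prodMk continuousOn_const)
        fun t ht => ⟨ht, mem_univ x⟩) fun t ht => hf_pos t ht x]
  have hFp : ∫ t in (0 : ℝ)..1, Fp lam p (f t) (f' t)
      = p * ∫ t, (∫ x, |D t x| ^ p ∂lam) ^ (1 / p) ∂ν := by
    rw [intervalIntegral.integral_of_le zero_le_one, ← integral_const_mul]
    exact setIntegral_congr_fun measurableSet_Ioc fun t ht =>
      Fp_eq_mul_rpow_integral lam hp0 (hf_pos t (Ioc_subset_Icc_self ht)) (f' t)
  rw [hFp]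
  gcongr
  simpa only [hFTC] using rpow_integral_abs_integral_rpow_le hp hD_meas hD_bdd
end

section
/- Let p ∈ (1, ∞) with Hölder conjugate p* (1/p + 1/p* = 1), let u₀ > 0 and v ∈ ℝ. Set T = ∞ if v ≥ 0 and T = p·u₀/(−v) if v < 0. Then the function g(t) = (u₀^{1/p} + (t/p)·v·u₀^{1/p − 1})^p is positive on [0, T), satisfies g″ = (g′)²/(p*·g) with g(0) = u₀ and g′(0) = v, and it is the unique such solution: any positive twice-differentiable solution of this initial value problem on a subinterval [0, T′) coincides with g there and necessarily T′ ≤ T. If v < 0 then g(t) → 0 as t → T, so the solution exists globally (T = ∞) if and only if v ≥ 0. -/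
/-!
Since `1/q = 1 - 1/p`, for positive `g` the equation `g'' = (g')² / (q g)` says exactly that
`(g^{1/p})'' = 0`. So `g^{1/p}` is the affine function `u₀^{1/p} + t v u₀^{1/p-1} / p` fixed by
the initial data, and `g` is its `p`-th power. When `v < 0` this affine function vanishes at
`t = p u₀ / (-v)`, which bounds every positive solution's interval and forces `g → 0` there.
-/

open Set Filter Topology

/-- The explicit solution `g(t) = (u₀^{1/p} + (t/p)·v·u₀^{1/p−1})^p` of the pointwise
geodesic equation of the `L^p`-Fisher–Rao metric. -/
noncomputable def gsol (p u₀ v : ℝ) : ℝ → ℝ :=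
  fun t => (u₀ ^ (1 / p) + (t / p) * v * u₀ ^ (1 / p - 1)) ^ p

theorem Convex.eq_of_hasDerivWithinAt_zero {E : Type*} [NormedAddCommGroup E] [NormedSpace ℝ E]
    {s : Set ℝ} (hs : Convex ℝ s) {f : ℝ → E} (hf : ∀ x ∈ s, HasDerivWithinAt f 0 s x)
    {x y : ℝ} (hx : x ∈ s) (hy : y ∈ s) : f x = f y := by
  have := hs.norm_image_sub_le_of_norm_hasDerivWithin_le hf (fun _ _ => norm_zero.le) hx hy
  rw [zero_mul, norm_le_zero_iff, sub_eq_zero] at this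
  exact this.symm

theorem Convex.eq_add_mul_of_hasDerivWithinAt {s : Set ℝ} (hs : Convex ℝ s) {f f' : ℝ → ℝ}
    (hf : ∀ x ∈ s, HasDerivWithinAt f (f' x) s x) (hf' : ∀ x ∈ s, HasDerivWithinAt f' 0 s x)
    {x y : ℝ} (hx : x ∈ s) (hy : y ∈ s) : f y = f x + (y - x) * f' x := by
  have hg : ∀ z ∈ s, HasDerivWithinAt (fun z => f z - z * f' x) 0 s z := fun z hz =>
    ((hf z hz).sub ((hasDerivWithinAt_id z s).mul_const (f' x))).congr_deriv
      (by rw [hs.eq_of_hasDerivWithinAt_zero hf' hz hx, one_mul, sub_self])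
  linarith [hs.eq_of_hasDerivWithinAt_zero hg hx hy]

theorem HasDerivWithinAt.second_deriv_rpow_const_eq_zero {h h' : ℝ → ℝ} {h'' r t : ℝ} {s : Set ℝ}
    (hh : HasDerivWithinAt h (h' t) s t) (hh' : HasDerivWithinAt h' h'' s t) (hpos : 0 < h t)
    (hode : h'' * h t = (1 - r) * h' t ^ 2) :
    HasDerivWithinAt (fun x => h' x * r * h x ^ (r - 1)) 0 s t := by
  have hsplit : h t ^ (r - 1) = h t ^ (r - 1 - 1) * h t := by
    rw [← Real.rpow_add_one hpos.ne', sub_add_cancel]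
  refine ((hh'.mul_const r).mul (hh.rpow_const (p := r - 1) (Or.inl hpos.ne'))).congr_deriv ?_
  rw [hsplit]
  linear_combination (r * h t ^ (r - 1 - 1)) * hode

theorem rpow_one_div_eq_add_mul_of_geodesic {p q : ℝ} (hpq : p.HolderConjugate q) {s : Set ℝ}
    (hs : Convex ℝ s) {h h' h'' : ℝ → ℝ} (hpos : ∀ t ∈ s, 0 < h t)
    (hd : ∀ t ∈ s, HasDerivWithinAt h (h' t) s t) (hd' : ∀ t ∈ s, HasDerivWithinAt h' (h'' t) s t)
    (hode : ∀ t ∈ s, h'' t = h' t ^ 2 / (q * h t)) {t₀ t : ℝ} (ht₀ : t₀ ∈ s) (ht : t ∈ s) :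
    h t ^ (1 / p) = h t₀ ^ (1 / p) + (t - t₀) * (h' t₀ * (1 / p) * h t₀ ^ (1 / p - 1)) := by
  refine hs.eq_add_mul_of_hasDerivWithinAt (f := fun x => h x ^ (1 / p))
    (f' := fun x => h' x * (1 / p) * h x ^ (1 / p - 1)) (fun x hx => ?_) (fun x hx => ?_) ht₀ ht
  · exact (hd x hx).rpow_const (Or.inl (hpos x hx).ne')
  · refine (hd x hx).second_deriv_rpow_const_eq_zero (hd' x hx) (hpos x hx) ?_
    rw [hode x hx, one_div, hpq.one_sub_inv]
    field_simp [hpq.symm.ne_zero, (hpos x hx).ne']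

noncomputable def gsolRoot (p u₀ v t : ℝ) : ℝ := u₀ ^ (1 / p) + (t / p) * v * u₀ ^ (1 / p - 1)

section gsol

variable {p u₀ v : ℝ}

theorem gsol_apply (t : ℝ) : gsol p u₀ v t = gsolRoot p u₀ v t ^ p := rfl

theorem gsolRoot_zero : gsolRoot p u₀ v 0 = u₀ ^ (1 / p) := by simp [gsolRoot]

theorem gsolRoot_eq_mul (hu : 0 < u₀) (t : ℝ) :
    gsolRoot p u₀ v t = u₀ ^ (1 / p) * (1 + t * v / (p * u₀)) := by
  rw [gsolRoot, Real.rpow_sub_one hu.ne']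
  ring

theorem gsolRoot_pos (hp : 0 < p) (hu : 0 < u₀) {t : ℝ} (ht : 0 ≤ t)
    (hT : v < 0 → t < p * u₀ / (-v)) : 0 < gsolRoot p u₀ v t := by
  rw [gsolRoot_eq_mul hu]
  refine mul_pos (Real.rpow_pos_of_pos hu _) ?_
  rcases le_or_gt 0 v with hv | hv
  · have : 0 ≤ t * v / (p * u₀) := by positivity
    linarith
  · have htv : t * -v < p * u₀ := (lt_div_iff₀ (neg_pos.mpr hv)).mp (hT hv)
    have : -1 < t * v / (p * u₀) := by
      rw [lt_div_iff₀ (by positivity)]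
      linarith
    linarith

theorem gsolRoot_div_neg_eq_zero (hp : p ≠ 0) (hu : 0 < u₀) (hv : v ≠ 0) :
    gsolRoot p u₀ v (p * u₀ / (-v)) = 0 := by
  rw [gsolRoot_eq_mul hu]
  field_simp
  ring

theorem hasDerivAt_gsolRoot (t : ℝ) :
    HasDerivAt (gsolRoot p u₀ v) (v * u₀ ^ (1 / p - 1) / p) t :=
  ((((hasDerivAt_id t).div_const p).mul_const v).mul_const _).const_add _ |>.congr_deriv
    (by ring)

theorem continuous_gsolRoot : Continuous (gsolRoot p u₀ v) :=
  continuous_iff_continuousAt.mpr fun t => (hasDerivAt_gsolRoot t).continuousAt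

theorem hasDerivAt_gsol {t : ℝ} (ht : 0 < gsolRoot p u₀ v t) :
    HasDerivAt (gsol p u₀ v) (v * u₀ ^ (1 / p - 1) / p * p * gsolRoot p u₀ v t ^ (p - 1)) t :=
  (hasDerivAt_gsolRoot t).rpow_const (Or.inl ht.ne')

theorem gsol_zero (hp : p ≠ 0) (hu : 0 < u₀) : gsol p u₀ v 0 = u₀ := by
  rw [gsol_apply, gsolRoot_zero, one_div, Real.rpow_inv_rpow hu.le hp]

theorem deriv_gsol_zero (hp : p ≠ 0) (hu : 0 < u₀) : deriv (gsol p u₀ v) 0 = v := by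
  have hroot : 0 < gsolRoot p u₀ v 0 := by rw [gsolRoot_zero]; positivity
  have hcancel : u₀ ^ (1 / p - 1) * (u₀ ^ (1 / p)) ^ (p - 1) = 1 := by
    rw [← Real.rpow_mul hu.le, ← Real.rpow_add hu]
    convert Real.rpow_zero u₀ using 2
    field_simp
    ring
  rw [(hasDerivAt_gsol hroot).deriv, gsolRoot_zero, div_mul_cancel₀ _ hp, mul_assoc, hcancel,
    mul_one]

theorem deriv_deriv_gsol {t : ℝ} (ht : 0 < gsolRoot p u₀ v t) :
    deriv (deriv (gsol p u₀ v)) t = v * u₀ ^ (1 / p - 1) / p * p *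
      (v * u₀ ^ (1 / p - 1) / p * (p - 1) * gsolRoot p u₀ v t ^ (p - 1 - 1)) := by
  have hderiv : deriv (gsol p u₀ v) =ᶠ[𝓝 t]
      fun s => v * u₀ ^ (1 / p - 1) / p * p * gsolRoot p u₀ v s ^ (p - 1) := by
    filter_upwards [continuous_gsolRoot.isOpen_preimage _ isOpen_Ioi |>.mem_nhds ht] with s hs
    exact (hasDerivAt_gsol hs).deriv
  rw [hderiv.deriv_eq]
  exact (((hasDerivAt_gsolRoot t).rpow_const (Or.inl ht.ne')).const_mul _).deriv

theorem deriv_deriv_gsol_eq {q t : ℝ} (hpq : p.HolderConjugate q) (ht : 0 < gsolRoot p u₀ v t) :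
    deriv (deriv (gsol p u₀ v)) t = deriv (gsol p u₀ v) t ^ 2 / (q * gsol p u₀ v t) := by
  rw [deriv_deriv_gsol ht, (hasDerivAt_gsol ht).deriv, gsol_apply]
  set x := gsolRoot p u₀ v t
  have hx1 : x ^ (p - 1) = x ^ (p - 1 - 1) * x := by rw [← Real.rpow_add_one ht.ne', sub_add_cancel]
  have hx2 : x ^ p = x ^ (p - 1) * x := by rw [← Real.rpow_add_one ht.ne', sub_add_cancel]
  have hy : 0 < x ^ (p - 1 - 1) := Real.rpow_pos_of_pos ht _
  have hq := hpq.symm.pos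
  rw [hx2, hx1, eq_div_iff (by positivity)]
  linear_combination
    (v * u₀ ^ (1 / p - 1) / p) ^ 2 * p * (x ^ (p - 1 - 1) * x) ^ 2 * hpq.sub_one_mul_conj

theorem tendsto_gsol_div_neg (hp : 0 < p) (hu : 0 < u₀) (hv : v ≠ 0) :
    Tendsto (gsol p u₀ v) (𝓝 (p * u₀ / (-v))) (𝓝 0) := by
  have hpow := (Real.continuousAt_rpow_const 0 p (Or.inr hp.le)).tendsto
  rw [Real.zero_rpow hp.ne'] at hpow
  refine hpow.comp ?_
  rw [← gsolRoot_div_neg_eq_zero hp.ne' hu hv]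
  exact continuous_gsolRoot.tendsto _

end gsol

/-- Explicit solution and uniqueness for the pointwise geodesic ODE `g″ = (g′)²/(q·g)`
with `g(0) = u₀ > 0`, `g′(0) = v`, on the maximal interval `[0,T)` with `T = ∞` for
`v ≥ 0` and `T = p·u₀/(−v)` for `v < 0`; if `v < 0` then `g(t) → 0` as `t → T`. -/
theorem stmt_7 (p q u₀ v : ℝ) (hp : 1 < p) (hpq : 1 / p + 1 / q = 1) (hu : 0 < u₀) :
    (∀ t : ℝ, 0 ≤ t → (v < 0 → t < p * u₀ / (-v)) → 0 < gsol p u₀ v t) ∧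
    gsol p u₀ v 0 = u₀ ∧
    deriv (gsol p u₀ v) 0 = v ∧
    (∀ t : ℝ, 0 ≤ t → (v < 0 → t < p * u₀ / (-v)) →
      deriv (deriv (gsol p u₀ v)) t = (deriv (gsol p u₀ v) t) ^ 2 / (q * gsol p u₀ v t)) ∧
    (∀ T' : ℝ, 0 < T' → ∀ h h' h'' : ℝ → ℝ,
      (∀ t ∈ Set.Ico (0 : ℝ) T', 0 < h t) →
      (∀ t ∈ Set.Ico (0 : ℝ) T', HasDerivWithinAt h (h' t) (Set.Ico 0 T') t) →
      (∀ t ∈ Set.Ico (0 : ℝ) T', HasDerivWithinAt h' (h'' t) (Set.Ico 0 T') t) →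
      h 0 = u₀ → h' 0 = v →
      (∀ t ∈ Set.Ico (0 : ℝ) T', h'' t = (h' t) ^ 2 / (q * h t)) →
      (∀ t ∈ Set.Ico (0 : ℝ) T', h t = gsol p u₀ v t) ∧ (v < 0 → T' ≤ p * u₀ / (-v))) ∧
    (v < 0 → Filter.Tendsto (gsol p u₀ v)
      (nhdsWithin (p * u₀ / (-v)) (Set.Iio (p * u₀ / (-v)))) (nhds 0)) := by
  have hpq' : p.HolderConjugate q :=
    Real.holderConjugate_iff.mpr ⟨hp, by simpa only [one_div] using hpq⟩
  have hp₀ : 0 < p := hpq'.pos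
  refine ⟨fun t ht hT => Real.rpow_pos_of_pos (gsolRoot_pos hp₀ hu ht hT) p,
    gsol_zero hp₀.ne' hu, deriv_gsol_zero hp₀.ne' hu,
    fun t ht hT => deriv_deriv_gsol_eq hpq' (gsolRoot_pos hp₀ hu ht hT), ?_,
    fun hv => (tendsto_gsol_div_neg hp₀ hu hv.ne).mono_left nhdsWithin_le_nhds⟩
  intro T' hT' h h' h'' hpos hd hd' h₀ h'₀ hode
  have hroot : ∀ t ∈ Ico 0 T', h t ^ (1 / p) = gsolRoot p u₀ v t := fun t ht => by
    rw [rpow_one_div_eq_add_mul_of_geodesic hpq' (convex_Ico 0 T') hpos hd hd' hode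
      (left_mem_Ico.mpr hT') ht, h₀, h'₀, gsolRoot]
    ring
  refine ⟨fun t ht => ?_, fun hv => ?_⟩
  · rw [gsol_apply, ← hroot t ht, one_div, Real.rpow_inv_rpow (hpos t ht).le hp₀.ne']
  · by_contra! hT
    have hmem : p * u₀ / (-v) ∈ Ico 0 T' := ⟨div_nonneg (by positivity) (by linarith), hT⟩
    have hzero := hroot _ hmem
    rw [gsolRoot_div_neg_eq_zero hp₀.ne' hu hv.ne] at hzero
    exact (Real.rpow_pos_of_pos (hpos _ hmem) _).ne' hzero
end

section
/- Let M be a compact smooth manifold, λ a finite Borel measure on M, and p ∈ (1, ∞). Then the closure in L^p(λ) of the set { f^{1/p} : f ∈ C^∞(M, ℝ), f(x) > 0 for all x ∈ M } equals { h ∈ L^p(λ) : h ≥ 0 λ-almost everywhere }. -/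
/-!
The cone of a.e. nonnegative elements is closed in `L^p` and contains every `f ^ (1 / p)`,
which gives one inclusion. Conversely, continuous functions are dense in `L^p` and `h ↦ h ⊔ 0`
is continuous, so a nonnegative `h` is a limit of nonnegative continuous functions; on a compact
manifold each of these is a uniform limit of smooth positive functions `g` (a partition of unity
smooths `u + ε / 2` within `ε / 2`), and `g = (g ^ p) ^ (1 / p)`.
-/

open MeasureTheory Set
open scoped Manifold ENNReal ContDiff

section SmoothApproximation

variable {E H M : Type*} [NormedAddCommGroup E] [NormedSpace ℝ E] [FiniteDimensional ℝ E]
  [TopologicalSpace H] {I : ModelWithCorners ℝ E H} [TopologicalSpace M] [T2Space M]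
  [SigmaCompactSpace M] [ChartedSpace H M] [IsManifold I ∞ M] {n : ℕ∞}

theorem ContinuousMap.exists_contMDiff_abs_sub_lt (u : C(M, ℝ)) {ε : ℝ} (hε : 0 < ε) :
    ∃ g : M → ℝ, ContMDiff I 𝓘(ℝ) n g ∧ ∀ x, |g x - u x| < ε := by
  obtain ⟨g, hg⟩ := exists_contMDiffMap_forall_mem_convex_of_local_const I (n := n)
    (t := fun x ↦ Metric.ball (u x) ε) (fun x ↦ convex_ball _ _) fun x ↦
      ⟨u x, ((u.continuous.tendsto x).eventually (Metric.ball_mem_nhds (u x) hε)).mono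
        fun _ hy ↦ Metric.mem_ball_comm.1 hy⟩
  exact ⟨g, g.contMDiff, fun x ↦ by simpa only [Metric.mem_ball, Real.dist_eq] using hg x⟩

theorem ContinuousMap.exists_contMDiff_pos_abs_sub_lt {u : C(M, ℝ)} (hu : 0 ≤ u) {ε : ℝ}
    (hε : 0 < ε) : ∃ g : M → ℝ, ContMDiff I 𝓘(ℝ) n g ∧ (∀ x, 0 < g x) ∧ ∀ x, |g x - u x| < ε := by
  obtain ⟨g, hg, hgu⟩ :=
    (u + const M (ε / 2)).exists_contMDiff_abs_sub_lt (I := I) (n := n) (half_pos hε)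
  have hg_bounds : ∀ x, u x < g x ∧ g x < u x + ε := fun x ↦ by
    have := abs_lt.1 (hgu x)
    simp only [add_apply, const_apply] at this
    constructor <;> linarith
  refine ⟨g, hg, fun x ↦ (hu x).trans_lt (hg_bounds x).1, fun x ↦ abs_lt.2 ?_⟩
  constructor <;> linarith [hg_bounds x]

end SmoothApproximation

theorem ContinuousMap.mem_closure_contMDiff_pos {E H M : Type*} [NormedAddCommGroup E]
    [NormedSpace ℝ E] [FiniteDimensional ℝ E] [TopologicalSpace H] {I : ModelWithCorners ℝ E H}
    [TopologicalSpace M] [T2Space M] [CompactSpace M] [ChartedSpace H M] [IsManifold I ∞ M]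
    {n : ℕ∞} {u : C(M, ℝ)} (hu : 0 ≤ u) :
    u ∈ closure {g : C(M, ℝ) | ContMDiff I 𝓘(ℝ) n g ∧ ∀ x, 0 < g x} := by
  refine Metric.mem_closure_iff.2 fun ε hε ↦ ?_
  obtain ⟨g, hg, hpos, hgu⟩ := u.exists_contMDiff_pos_abs_sub_lt (I := I) (n := n) hu hε
  refine ⟨⟨g, hg.continuous⟩, ⟨hg, hpos⟩, (dist_lt_iff hε).2 fun x ↦ ?_⟩
  rw [dist_comm, Real.dist_eq]
  exact hgu x

theorem ContMDiff.rpow_const_of_pos {E H M : Type*} [NormedAddCommGroup E] [NormedSpace ℝ E]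
    [TopologicalSpace H] {I : ModelWithCorners ℝ E H} [TopologicalSpace M] [ChartedSpace H M]
    {n : WithTop ℕ∞} {f : M → ℝ} (hf : ContMDiff I 𝓘(ℝ) n f) (hpos : ∀ x, 0 < f x) (p : ℝ) :
    ContMDiff I 𝓘(ℝ) n fun x ↦ f x ^ p :=
  fun x ↦ (Real.contDiffAt_rpow_const_of_ne (hpos x).ne').contMDiffAt.comp x (hf x)

section Lp

variable {α : Type*} [MeasurableSpace α] {μ : Measure α} {p : ℝ≥0∞} [Fact (1 ≤ p)]

theorem MeasureTheory.Lp.isClosed_setOf_ae_nonneg :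
    IsClosed {f : Lp ℝ p μ | ∀ᵐ x ∂μ, 0 ≤ f x} := by
  have h_eq : {f : Lp ℝ p μ | ∀ᵐ x ∂μ, 0 ≤ f x} = Ici 0 := by
    ext f
    exact Lp.coeFn_nonneg f
  exact h_eq ▸ isClosed_Ici

variable [TopologicalSpace α] [BorelSpace α] [CompactSpace α] [IsFiniteMeasure μ]

theorem ContinuousMap.toLp_sup (u v : C(α, ℝ)) :
    toLp p μ ℝ (u ⊔ v) = toLp p μ ℝ u ⊔ toLp p μ ℝ v := by
  refine Lp.ext ?_
  filter_upwards [coeFn_toLp (p := p) (𝕜 := ℝ) μ (u ⊔ v), coeFn_toLp (p := p) (𝕜 := ℝ) μ u,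
    coeFn_toLp (p := p) (𝕜 := ℝ) μ v, Lp.coeFn_sup (toLp p μ ℝ u) (toLp p μ ℝ v)]
    with x huv hu hv hsup
  rw [hsup, huv, Pi.sup_apply, hu, hv]
  rfl

theorem ContinuousMap.mem_closure_toLp_image_nonneg [NormalSpace α] [μ.WeaklyRegular]
    (hp : p ≠ ⊤) {f : Lp ℝ p μ} (hf : 0 ≤ f) : f ∈ closure (toLp p μ ℝ '' {u | 0 ≤ u}) := by
  have hf_sup : f ⊔ 0 ∈ closure (toLp p μ ℝ '' {u | 0 ≤ u}) :=
    map_mem_closure (f := (· ⊔ 0)) (continuous_id.sup continuous_const)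
      (toLp_denseRange ℝ μ ℝ hp f)
      (forall_mem_range.2 fun u ↦ ⟨u ⊔ 0, (le_sup_right : 0 ≤ u ⊔ 0), by rw [toLp_sup, map_zero]⟩)
  rwa [sup_eq_left.2 hf] at hf_sup

end Lp

/-- The metric completion of the space of smooth positive densities under the
`L^p`-Fisher–Rao distance, via the `p`-root transform: the closure in `L^p(λ)` of the set
of `p`-th roots of smooth positive functions on a compact smooth manifold `M` is the set
of almost-everywhere nonnegative elements of `L^p(λ)`. -/
theorem stmt_8 {E : Type*} [NormedAddCommGroup E] [NormedSpace ℝ E] [FiniteDimensional ℝ E]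
    {H : Type*} [TopologicalSpace H] (IM : ModelWithCorners ℝ E H)
    {M : Type*} [TopologicalSpace M] [T2Space M] [ChartedSpace H M]
    [IsManifold IM (⊤ : ℕ∞) M] [CompactSpace M]
    [MeasurableSpace M] [BorelSpace M]
    (lam : Measure M) [IsFiniteMeasure lam]
    (p : ℝ) (hp : 1 < p) [Fact (1 ≤ ENNReal.ofReal p)] :
    closure {h : Lp ℝ (ENNReal.ofReal p) lam |
        ∃ f : M → ℝ, ContMDiff IM (modelWithCornersSelf ℝ ℝ) (⊤ : ℕ∞) f ∧ (∀ x, 0 < f x) ∧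
          ⇑h =ᵐ[lam] fun x => f x ^ (1 / p)}
      = {h : Lp ℝ (ENNReal.ofReal p) lam | ∀ᵐ x ∂lam, 0 ≤ h x} := by
  have := Manifold.metrizableSpace IM M
  refine (closure_minimal ?_ Lp.isClosed_setOf_ae_nonneg).antisymm fun h hh ↦ ?_
  · rintro h ⟨f, -, hf, hhf⟩
    filter_upwards [hhf] with x hx
    exact hx ▸ (Real.rpow_pos_of_pos (hf x) _).le
  refine closure_minimal ?_ isClosed_closure <|
    ContinuousMap.mem_closure_toLp_image_nonneg ENNReal.ofReal_ne_top (Lp.coeFn_nonneg h |>.1 hh)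
  rintro _ ⟨u, hu, rfl⟩
  refine map_mem_closure (ContinuousMap.toLp _ lam ℝ).continuous
    (ContinuousMap.mem_closure_contMDiff_pos (I := IM) (n := ⊤) hu) ?_
  rintro g ⟨hg, hpos⟩
  refine ⟨fun x ↦ g x ^ p, hg.rpow_const_of_pos hpos p,
    fun x ↦ Real.rpow_pos_of_pos (hpos x) p, ?_⟩
  filter_upwards [ContinuousMap.coeFn_toLp (p := ENNReal.ofReal p) (𝕜 := ℝ) lam g] with x hx
  rw [hx, ← Real.rpow_mul (hpos x).le, mul_one_div_cancel (by linarith), Real.rpow_one]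
end

section
/- Let M be a compact metric space, μ a finite Borel measure on M with μ(M) > 0, and p ∈ (1, ∞). Let u, a, b ∈ C(M; ℝ) with u(x) ≠ 0 for all x ∈ M. Set A := ∫_M |u|^p dμ and I(φ, ψ) := ∫_M |u|^{p−2} φ ψ dμ. Then the function (r, s) ↦ (∫_M |u + r·a + s·b|^p dμ)^{2/p} is twice continuously differentiable on a neighborhood of (0, 0), and (1/2)·∂_r ∂_s (∫_M |u + r·a + s·b|^p dμ)^{2/p} |_{(0,0)} = (p−1)·A^{2/p − 1}·I(a, b) − (p−2)·A^{2/p − 2}·I(u, a)·I(u, b). -/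
/-!
Away from `0` the function `t ↦ |t| ^ p` is smooth, and the parameters `(r, s)` for which
`u + r • a + s • b` has no zero form an open set `U ∋ (0, 0)` (by compactness of `M`). On compact
subsets of `U × M` every `(r, s)`-derivative of the integrand is bounded, so the integral can be
differentiated under the integral sign any number of times. The Hessian formula is then the
chain rule for `A ↦ A ^ (2 / p)`, fed with `∂ₛA = p I(u, b)`, `∂ᵣA = p I(u, a)` and
`∂ᵣ∂ₛA = p (p - 1) I(a, b)`.
-/

open MeasureTheory Set Filter Topology
open scoped ContDiff

section CompactParameter

variable {X M : Type*} [TopologicalSpace X] [TopologicalSpace M] [CompactSpace M]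

theorem isOpen_setOf_forall_ne_zero {f : X → M → ℝ} (hf : Continuous f.uncurry) :
    IsOpen {e | ∀ x, f e x ≠ 0} := by
  have hzero : IsClosed (Prod.fst '' {q : X × M | f q.1 q.2 = 0}) :=
    isClosedMap_fst_of_compactSpace _ (isClosed_eq hf continuous_const)
  convert hzero.isOpen_compl using 1
  ext e
  simp

variable [MeasurableSpace M] [OpensMeasurableSpace M] {μ : Measure M} [IsFiniteMeasure μ]

theorem integral_pos_of_continuous_of_pos
    (hμ : 0 < μ univ) {f : M → ℝ} (hf : Continuous f) (hpos : ∀ x, 0 < f x) :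
    0 < ∫ x, f x ∂μ := by
  rw [integral_pos_iff_support_of_nonneg (fun x => (hpos x).le)
    (hf.integrable_of_hasCompactSupport (.of_compactSpace _))]
  rwa [Function.support_eq_univ fun x => (hpos x).ne']

theorem continuousOn_integral_of_continuousOn {F : X → M → ℝ} {s : Set X}
    (hF : ContinuousOn F.uncurry (s ×ˢ univ)) :
    ContinuousOn (fun e => ∫ x, F e x ∂μ) s := by
  simpa using continuousOn_integral_bilinear_of_locally_integrable_of_compact_support
    (ContinuousLinearMap.mul ℝ ℝ) isCompact_univ hF (fun _ _ _ h => absurd trivial h)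
    (g := fun _ => (1 : ℝ)) (μ := μ) (integrableOn_const (measure_ne_top _ _))

theorem hasFDerivAt_integral_of_continuousOn_fderiv {E : Type*} [NormedAddCommGroup E]
    [NormedSpace ℝ E] [FiniteDimensional ℝ E] {F : E → M → ℝ} {F' : E → M → E →L[ℝ] ℝ}
    {U : Set E} (hU : IsOpen U) (hF : ∀ e ∈ U, Continuous (F e))
    (hF' : ContinuousOn F'.uncurry (U ×ˢ univ))
    (hdiff : ∀ e ∈ U, ∀ x, HasFDerivAt (F · x) (F' e x) e) {e₀ : E} (he₀ : e₀ ∈ U) :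
    HasFDerivAt (fun e => ∫ x, F e x ∂μ) (∫ x, F' e₀ x ∂μ) e₀ := by
  obtain ⟨r, hr, hrU⟩ := Metric.nhds_basis_closedBall.mem_iff.1 (hU.mem_nhds he₀)
  obtain ⟨C, hC⟩ := ((isCompact_closedBall e₀ r).prod isCompact_univ).exists_bound_of_continuousOn
    (hF'.mono (prod_mono hrU subset_rfl))
  have hF'cont : Continuous (F' e₀) :=
    hF'.comp_continuous (.prodMk_right e₀) fun x => ⟨he₀, trivial⟩
  refine hasFDerivAt_integral_of_dominated_of_fderiv_le (Metric.closedBall_mem_nhds e₀ hr)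
    ?_ ?_ hF'cont.aestronglyMeasurable ?_ (integrable_const C) ?_
  · filter_upwards [hU.mem_nhds he₀] with e he
    exact (hF e he).aestronglyMeasurable
  · exact (hF e₀ he₀).integrable_of_hasCompactSupport (.of_compactSpace _)
  · exact .of_forall fun x e he => hC (e, x) ⟨he, trivial⟩
  · exact .of_forall fun x e he => hdiff e (hrU he) x

end CompactParameter

theorem hasDerivAt_mul_abs_rpow_sub_two_mul (p : ℝ) {t : ℝ} (ht : t ≠ 0) :
    HasDerivAt (fun t => p * |t| ^ (p - 2) * t) (p * (p - 1) * |t| ^ (p - 2)) t := by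
  refine ((((hasDerivAt_abs ht).rpow_const (p := p - 2) (Or.inl (abs_ne_zero.2 ht))).const_mul
    p).mul (hasDerivAt_id t)).congr_deriv ?_
  have habs : |t| ^ (p - 2) = |t| ^ (p - 2 - 1) * |t| := by
    rw [← Real.rpow_add_one (abs_ne_zero.2 ht)]; ring_nf
  rw [habs, id, ← sign_mul_self t]
  ring

theorem contDiffOn_abs_rpow (p : ℝ) (n : ℕ∞) :
    ContDiffOn ℝ n (fun t : ℝ => |t| ^ p) {t | t ≠ 0} := fun t ht =>
  ((Real.contDiffAt_rpow_const_of_ne (p := p) (abs_ne_zero.2 ht)).comp t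
    (contDiffAt_abs ht)).contDiffWithinAt

theorem integral_smul_fst_add_smul_snd {M : Type*} [MeasurableSpace M] {μ : Measure M}
    {f g : M → ℝ} (hf : Integrable f μ) (hg : Integrable g μ) :
    ∫ x, f x • ContinuousLinearMap.fst ℝ ℝ ℝ + g x • ContinuousLinearMap.snd ℝ ℝ ℝ ∂μ
      = (∫ x, f x ∂μ) • ContinuousLinearMap.fst ℝ ℝ ℝ
        + (∫ x, g x ∂μ) • ContinuousLinearMap.snd ℝ ℝ ℝ := by
  rw [integral_add (hf.smul_const _) (hg.smul_const _), integral_smul_const, integral_smul_const]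

theorem hasFDerivAt_pencil (u a b : ℝ) (rs : ℝ × ℝ) :
    HasFDerivAt (fun rs : ℝ × ℝ => u + rs.1 * a + rs.2 * b)
      (a • ContinuousLinearMap.fst ℝ ℝ ℝ + b • ContinuousLinearMap.snd ℝ ℝ ℝ) rs :=
  ((hasFDerivAt_fst.mul_const a).const_add u).add (hasFDerivAt_snd.mul_const b)

section Pencil

variable {M : Type*} [TopologicalSpace M] {u a b : M → ℝ}

theorem continuous_pencil (hu : Continuous u) (ha : Continuous a) (hb : Continuous b) :
    Continuous fun q : (ℝ × ℝ) × M => u q.2 + q.1.1 * a q.2 + q.1.2 * b q.2 := by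
  fun_prop

theorem ContinuousOn.comp_pencil {φ : ℝ → ℝ} (hφ : ContinuousOn φ {t | t ≠ 0})
    (hu : Continuous u) (ha : Continuous a) (hb : Continuous b) :
    ContinuousOn (fun q : (ℝ × ℝ) × M => φ (u q.2 + q.1.1 * a q.2 + q.1.2 * b q.2))
      ({rs | ∀ x, u x + rs.1 * a x + rs.2 * b x ≠ 0} ×ˢ univ) :=
  hφ.comp (continuous_pencil hu ha hb).continuousOn fun q hq => hq.1 q.2

variable [CompactSpace M]

theorem isOpen_setOf_forall_pencil_ne_zero (hu : Continuous u) (ha : Continuous a)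
    (hb : Continuous b) :
    IsOpen {rs : ℝ × ℝ | ∀ x, u x + rs.1 * a x + rs.2 * b x ≠ 0} :=
  isOpen_setOf_forall_ne_zero (continuous_pencil hu ha hb)

variable [MeasurableSpace M] [OpensMeasurableSpace M] {μ : Measure M} [IsFiniteMeasure μ]

theorem hasFDerivAt_integral_comp_pencil (hu : Continuous u) (ha : Continuous a)
    (hb : Continuous b) {φ φ' : ℝ → ℝ} (hφ : ∀ t ≠ 0, HasDerivAt φ (φ' t) t)
    (hφ' : ContinuousOn φ' {t | t ≠ 0}) {g : M → ℝ} (hg : Continuous g) {rs₀ : ℝ × ℝ}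
    (h₀ : ∀ x, u x + rs₀.1 * a x + rs₀.2 * b x ≠ 0) :
    HasFDerivAt (fun rs : ℝ × ℝ => ∫ x, φ (u x + rs.1 * a x + rs.2 * b x) * g x ∂μ)
      ((∫ x, φ' (u x + rs₀.1 * a x + rs₀.2 * b x) * (g x * a x) ∂μ) •
          ContinuousLinearMap.fst ℝ ℝ ℝ
        + (∫ x, φ' (u x + rs₀.1 * a x + rs₀.2 * b x) * (g x * b x) ∂μ) •
          ContinuousLinearMap.snd ℝ ℝ ℝ) rs₀ := by
  have hφc : ContinuousOn φ {t | t ≠ 0} := fun t ht => (hφ t ht).continuousAt.continuousWithinAt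
  have hφ'w := hφ'.comp_pencil hu ha hb
  have hderiv := hasFDerivAt_integral_of_continuousOn_fderiv (μ := μ)
    (F := fun (rs : ℝ × ℝ) x => φ (u x + rs.1 * a x + rs.2 * b x) * g x)
    (F' := fun (rs : ℝ × ℝ) x =>
      (φ' (u x + rs.1 * a x + rs.2 * b x) * (g x * a x)) • ContinuousLinearMap.fst ℝ ℝ ℝ
        + (φ' (u x + rs.1 * a x + rs.2 * b x) * (g x * b x)) • ContinuousLinearMap.snd ℝ ℝ ℝ)
    (isOpen_setOf_forall_pencil_ne_zero hu ha hb)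
    (fun rs hrs => (hφc.comp_continuous (by fun_prop) hrs).mul hg)
    (((hφ'w.mul (by fun_prop)).smul continuousOn_const).add
      ((hφ'w.mul (by fun_prop)).smul continuousOn_const))
    (fun rs hrs x => ((hφ _ (hrs x)).comp_hasFDerivAt rs (hasFDerivAt_pencil _ _ _ rs)).mul_const
      (g x) |>.congr_fderiv (by module)) h₀
  have hc : Continuous fun x => φ' (u x + rs₀.1 * a x + rs₀.2 * b x) :=
    hφ'.comp_continuous (by fun_prop) h₀
  have hint : ∀ c : M → ℝ, Continuous c →
      Integrable (fun x => φ' (u x + rs₀.1 * a x + rs₀.2 * b x) * c x) μ := fun c hc' =>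
    (hc.mul hc').integrable_of_hasCompactSupport (.of_compactSpace _)
  rwa [integral_smul_fst_add_smul_snd (hint (fun x => g x * a x) (hg.mul ha))
    (hint (fun x => g x * b x) (hg.mul hb))] at hderiv

theorem contDiffOn_integral_comp_pencil (hu : Continuous u) (ha : Continuous a)
    (hb : Continuous b) (n : ℕ) {φ : ℝ → ℝ} (hφ : ContDiffOn ℝ n φ {t | t ≠ 0}) {g : M → ℝ}
    (hg : Continuous g) :
    ContDiffOn ℝ n (fun rs : ℝ × ℝ => ∫ x, φ (u x + rs.1 * a x + rs.2 * b x) * g x ∂μ)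
      {rs | ∀ x, u x + rs.1 * a x + rs.2 * b x ≠ 0} := by
  induction n generalizing φ g with
  | zero =>
    exact contDiffOn_zero.2 (continuousOn_integral_of_continuousOn
      (((contDiffOn_zero.1 hφ).comp_pencil hu ha hb).mul (by fun_prop)))
  | succ n ih =>
    rw [Nat.cast_succ] at hφ ⊢
    obtain ⟨hφd, -, hφ'⟩ := (contDiffOn_succ_iff_deriv_of_isOpen isOpen_ne).1 hφ
    have hD := fun (rs : ℝ × ℝ) (hrs : ∀ x, u x + rs.1 * a x + rs.2 * b x ≠ 0) =>
      hasFDerivAt_integral_comp_pencil (μ := μ) hu ha hb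
        (fun t ht => ((hφd t ht).differentiableAt (isOpen_ne.mem_nhds ht)).hasDerivAt)
        hφ'.continuousOn hg hrs
    rw [contDiffOn_succ_iff_fderiv_of_isOpen (isOpen_setOf_forall_pencil_ne_zero hu ha hb)]
    refine ⟨fun rs hrs => (hD rs hrs).differentiableAt.differentiableWithinAt, by simp, ?_⟩
    exact (((ih hφ' (hg.mul ha)).smul contDiffOn_const).add
      ((ih hφ' (hg.mul hb)).smul contDiffOn_const)).congr fun rs hrs => (hD rs hrs).fderiv

theorem integral_abs_rpow_pencil_pos (hu : Continuous u) (ha : Continuous a) (hb : Continuous b)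
    (hμ : 0 < μ univ) (p : ℝ) {rs : ℝ × ℝ} (hrs : ∀ x, u x + rs.1 * a x + rs.2 * b x ≠ 0) :
    0 < ∫ x, |u x + rs.1 * a x + rs.2 * b x| ^ p ∂μ :=
  integral_pos_of_continuous_of_pos hμ
    ((by fun_prop : Continuous _).rpow_const fun x => Or.inl (abs_ne_zero.2 (hrs x)))
    fun x => Real.rpow_pos_of_pos (abs_pos.2 (hrs x)) p

theorem contDiffOn_integral_abs_rpow_pencil (hu : Continuous u) (ha : Continuous a)
    (hb : Continuous b) (p : ℝ) :
    ContDiffOn ℝ ∞ (fun rs : ℝ × ℝ => ∫ x, |u x + rs.1 * a x + rs.2 * b x| ^ p ∂μ)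
      {rs | ∀ x, u x + rs.1 * a x + rs.2 * b x ≠ 0} :=
  contDiffOn_infty.2 fun n => by
    simpa only [mul_one] using contDiffOn_integral_comp_pencil (μ := μ) hu ha hb n
      (contDiffOn_abs_rpow p n) continuous_const (g := fun _ => 1)

theorem hasFDerivAt_integral_abs_rpow_pencil (hu : Continuous u) (ha : Continuous a)
    (hb : Continuous b) {p : ℝ} (hp : 1 < p) {rs₀ : ℝ × ℝ}
    (h₀ : ∀ x, u x + rs₀.1 * a x + rs₀.2 * b x ≠ 0) :
    HasFDerivAt (fun rs : ℝ × ℝ => ∫ x, |u x + rs.1 * a x + rs.2 * b x| ^ p ∂μ)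
      ((∫ x, p * |u x + rs₀.1 * a x + rs₀.2 * b x| ^ (p - 2)
            * (u x + rs₀.1 * a x + rs₀.2 * b x) * a x ∂μ) • ContinuousLinearMap.fst ℝ ℝ ℝ
        + (∫ x, p * |u x + rs₀.1 * a x + rs₀.2 * b x| ^ (p - 2)
            * (u x + rs₀.1 * a x + rs₀.2 * b x) * b x ∂μ) • ContinuousLinearMap.snd ℝ ℝ ℝ)
      rs₀ := by
  simpa only [mul_one, one_mul] using hasFDerivAt_integral_comp_pencil (μ := μ) hu ha hb
    (fun t _ => hasDerivAt_abs_rpow t hp)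
    (fun t ht => (hasDerivAt_mul_abs_rpow_sub_two_mul p ht).continuousAt.continuousWithinAt)
    continuous_const (g := fun _ => 1) h₀

theorem hasFDerivAt_integral_mul_abs_rpow_sub_two_mul_pencil (hu : Continuous u)
    (ha : Continuous a) (hb : Continuous b) (p : ℝ) {g : M → ℝ} (hg : Continuous g)
    {rs₀ : ℝ × ℝ} (h₀ : ∀ x, u x + rs₀.1 * a x + rs₀.2 * b x ≠ 0) :
    HasFDerivAt (fun rs : ℝ × ℝ => ∫ x, p * |u x + rs.1 * a x + rs.2 * b x| ^ (p - 2)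
        * (u x + rs.1 * a x + rs.2 * b x) * g x ∂μ)
      ((∫ x, p * (p - 1) * |u x + rs₀.1 * a x + rs₀.2 * b x| ^ (p - 2) * (g x * a x) ∂μ) •
          ContinuousLinearMap.fst ℝ ℝ ℝ
        + (∫ x, p * (p - 1) * |u x + rs₀.1 * a x + rs₀.2 * b x| ^ (p - 2) * (g x * b x) ∂μ) •
          ContinuousLinearMap.snd ℝ ℝ ℝ) rs₀ :=
  hasFDerivAt_integral_comp_pencil hu ha hb (fun _ => hasDerivAt_mul_abs_rpow_sub_two_mul p)
    (continuousOn_const.mul (contDiffOn_abs_rpow (p - 2) 0).continuousOn) hg h₀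

end Pencil

theorem deriv_deriv_eq_of_hasFDerivAt {F : ℝ × ℝ → ℝ} {D : ℝ × ℝ → ℝ × ℝ →L[ℝ] ℝ}
    {L : ℝ × ℝ →L[ℝ] ℝ} (hF : ∀ᶠ rs in 𝓝 0, HasFDerivAt F (D rs) rs)
    (hD : HasFDerivAt (fun rs => D rs (0, 1)) L 0) :
    deriv (fun r => deriv (fun s => F (r, s)) 0) 0 = L (1, 0) := by
  have hline : Tendsto (fun r : ℝ => (r, (0 : ℝ))) (𝓝 0) (𝓝 0) :=
    (continuous_id.prodMk continuous_const).tendsto' 0 0 rfl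
  have hinner : (fun r => deriv (fun s => F (r, s)) 0) =ᶠ[𝓝 0] fun r => D (r, 0) (0, 1) := by
    filter_upwards [hline.eventually hF] with r hr
    exact (hr.comp_hasDerivAt 0 ((hasDerivAt_const 0 r).prodMk (hasDerivAt_id 0))).deriv
  rw [hinner.deriv_eq]
  exact (hD.comp_hasDerivAt (f := fun r : ℝ => (r, (0 : ℝ))) 0
    ((hasDerivAt_id (0 : ℝ)).prodMk (hasDerivAt_const (0 : ℝ) (0 : ℝ)))).deriv

/-- The Hessian of the squared `L^p`-Fisher–Rao metric: the map
`(r,s) ↦ (∫ |u + r·a + s·b|^p dμ)^{2/p}` is `C²` near `(0,0)` and one half of its mixed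
second derivative at the origin equals
`(p−1)·A^{2/p−1}·I(a,b) − (p−2)·A^{2/p−2}·I(u,a)·I(u,b)`. -/
theorem stmt_9 {M : Type*} [MetricSpace M] [CompactSpace M] [MeasurableSpace M] [BorelSpace M]
    (μ : Measure M) [IsFiniteMeasure μ] (hμ : 0 < μ Set.univ)
    (p : ℝ) (hp : 1 < p)
    (u a b : M → ℝ) (hu : Continuous u) (ha : Continuous a) (hb : Continuous b)
    (hu0 : ∀ x, u x ≠ 0) :
    (∃ U ∈ nhds ((0 : ℝ), (0 : ℝ)), ContDiffOn ℝ 2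
        (fun rs : ℝ × ℝ =>
          (∫ x, |u x + rs.1 * a x + rs.2 * b x| ^ p ∂μ) ^ (2 / p)) U) ∧
    (1 / 2) * deriv (fun r => deriv (fun s =>
          (∫ x, |u x + r * a x + s * b x| ^ p ∂μ) ^ (2 / p)) 0) 0
      = (p - 1) * (∫ x, |u x| ^ p ∂μ) ^ (2 / p - 1)
          * (∫ x, |u x| ^ (p - 2) * a x * b x ∂μ)
        - (p - 2) * (∫ x, |u x| ^ p ∂μ) ^ (2 / p - 2)
          * (∫ x, |u x| ^ (p - 2) * u x * a x ∂μ)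
          * (∫ x, |u x| ^ (p - 2) * u x * b x ∂μ) := by
  set U := {rs : ℝ × ℝ | ∀ x, u x + rs.1 * a x + rs.2 * b x ≠ 0}
  set A := fun rs : ℝ × ℝ => ∫ x, |u x + rs.1 * a x + rs.2 * b x| ^ p ∂μ
  have hU : U ∈ 𝓝 0 := (isOpen_setOf_forall_pencil_ne_zero hu ha hb).mem_nhds (by simpa [U])
  have h0 : (0 : ℝ × ℝ) ∈ U := mem_of_mem_nhds hU
  have hA : ∀ rs ∈ U, A rs ≠ 0 := fun rs hrs => (integral_abs_rpow_pencil_pos hu ha hb hμ p hrs).ne'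
  refine ⟨⟨U, hU, ((contDiffOn_integral_abs_rpow_pencil hu ha hb p).of_le
    (by norm_cast)).rpow_const_of_ne hA⟩, ?_⟩
  have hDA := fun rs (hrs : rs ∈ U) => hasFDerivAt_integral_abs_rpow_pencil (μ := μ) hu ha hb hp hrs
  -- `∂ₛ(A ^ (2 / p)) = (2 / p) A ^ (2 / p - 1) ∂ₛA`, and this product is differentiated at `0`.
  rw [deriv_deriv_eq_of_hasFDerivAt (F := fun rs => A rs ^ (2 / p))
    (mem_of_superset hU fun rs hrs => (hDA rs hrs).rpow_const (p := 2 / p) (Or.inl (hA rs hrs)))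
    ((((hDA 0 h0).rpow_const (p := 2 / p - 1) (Or.inl (hA 0 h0))).const_mul (2 / p)).mul
      (hasFDerivAt_integral_mul_abs_rpow_sub_two_mul_pencil (μ := μ) hu ha hb p hb h0)
      |>.congr_of_eventuallyEq (.of_forall fun rs => by simp))]
  simp only [add_apply, smul_apply, ContinuousLinearMap.coe_fst', ContinuousLinearMap.coe_snd',
    smul_eq_mul, mul_one, mul_zero, add_zero, Prod.fst_zero, Prod.snd_zero, zero_mul,
    mul_assoc, integral_const_mul, mul_comm (b _) (a _)]
  rw [show 2 / p - 1 - 1 = 2 / p - 2 by ring]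
  field_simp
  ring
end

section
/- Let M be a compact metric space, μ a finite Borel measure on M, and p ∈ (1, ∞). Let u, a ∈ C(M; ℝ) with u(x) ≠ 0 for all x ∈ M, and assume a is not equal to 0 μ-almost everywhere. Set A := ∫_M |u|^p dμ and I(φ, ψ) := ∫_M |u|^{p−2} φ ψ dμ. Then (p−1)·A^{2/p − 1}·I(a, a) − (p−2)·A^{2/p − 2}·I(u, a)² > 0. -/
/-!
The Hessian form equals `A^(2/p-2) * ((p-1) A I(a,a) - (p-2) I(u,a)²)`. For `p ≤ 2` both terms of
the bracket are nonnegative and the first is positive; for `p > 2` the weighted Cauchy–Schwarz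
inequality `I(u,a)² ≤ I(u,u) I(a,a) = A I(a,a)` bounds the bracket below by `A I(a,a) > 0`.
-/

open MeasureTheory

section WeightedIntegral

variable {α : Type*} [MeasurableSpace α] {μ : Measure α} {w f g : α → ℝ}

theorem sq_integral_weight_mul_le (hw : ∀ x, 0 ≤ w x)
    (hff : Integrable (fun x => w x * f x * f x) μ)
    (hfg : Integrable (fun x => w x * f x * g x) μ)
    (hgg : Integrable (fun x => w x * g x * g x) μ) :
    (∫ x, w x * f x * g x ∂μ) ^ 2 ≤
      (∫ x, w x * f x * f x ∂μ) * ∫ x, w x * g x * g x ∂μ := by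
  -- the quadratic `t ↦ ∫ w (t g + f)²` is nonnegative, so its discriminant is nonpositive
  have hquad : ∀ t : ℝ, 0 ≤ (∫ x, w x * g x * g x ∂μ) * (t * t)
      + 2 * (∫ x, w x * f x * g x ∂μ) * t + ∫ x, w x * f x * f x ∂μ := by
    intro t
    have hexpand : ∫ x, w x * (t * g x + f x) ^ 2 ∂μ = (∫ x, w x * g x * g x ∂μ) * (t * t)
        + 2 * (∫ x, w x * f x * g x ∂μ) * t + ∫ x, w x * f x * f x ∂μ := by
      have hg2 := hgg.mul_const (t * t)
      have hfg2 := (hfg.const_mul 2).mul_const t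
      have hsum : Integrable (fun x => w x * g x * g x * (t * t) + 2 * (w x * f x * g x) * t) μ :=
        hg2.add hfg2
      calc ∫ x, w x * (t * g x + f x) ^ 2 ∂μ
          = ∫ x, w x * g x * g x * (t * t) + 2 * (w x * f x * g x) * t
              + w x * f x * f x ∂μ := by
            congr 1 with x
            ring
        _ = _ := by
            rw [integral_add hsum hff, integral_add hg2 hfg2, integral_mul_const,
              integral_mul_const, integral_const_mul]
    rw [← hexpand]
    exact integral_nonneg fun x => mul_nonneg (hw x) (sq_nonneg _)
  have hdisc := discrim_le_zero hquad
  rw [discrim] at hdisc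
  linarith

theorem integral_weight_mul_self_pos (hw : ∀ x, 0 < w x)
    (hff : Integrable (fun x => w x * f x * f x) μ) (hf : ¬ f =ᵐ[μ] 0) :
    0 < ∫ x, w x * f x * f x ∂μ := by
  have hnonneg : 0 ≤ fun x => w x * f x * f x := fun x => by
    show 0 ≤ w x * f x * f x
    rw [mul_assoc]
    exact mul_nonneg (hw x).le (mul_self_nonneg (f x))
  refine (integral_nonneg hnonneg).lt_of_ne fun hzero => hf ?_
  filter_upwards [(integral_eq_zero_iff_of_nonneg hnonneg hff).mp hzero.symm] with x hx
  simpa [(hw x).ne'] using hx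

end WeightedIntegral

theorem abs_rpow_sub_two_mul_self {x : ℝ} (hx : x ≠ 0) (p : ℝ) :
    |x| ^ (p - 2) * x * x = |x| ^ p := by
  rw [mul_assoc, ← sq, ← sq_abs, ← Real.rpow_natCast, ← Real.rpow_add (abs_pos.mpr hx)]
  norm_num

theorem lp_hessian_form_pos {A J K p : ℝ} (q : ℝ) (hp : 1 < p) (hA : 0 < A) (hJ : 0 < J)
    (hKAJ : K ^ 2 ≤ A * J) :
    0 < (p - 1) * A ^ (q - 1) * J - (p - 2) * A ^ (q - 2) * K ^ 2 := by
  have hfactor : (p - 1) * A ^ (q - 1) * J - (p - 2) * A ^ (q - 2) * K ^ 2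
      = A ^ (q - 2) * ((p - 1) * A * J - (p - 2) * K ^ 2) := by
    rw [show q - 1 = (q - 2) + 1 by ring, Real.rpow_add_one hA.ne']
    ring
  rw [hfactor]
  refine mul_pos (Real.rpow_pos_of_pos hA _) ?_
  rcases le_or_gt p 2 with hp2 | hp2
  · nlinarith [mul_pos hA hJ, sq_nonneg K]
  · nlinarith [mul_pos hA hJ]

/-- Positive definiteness of the Hessian of the squared `L^p`-Fisher–Rao metric at a
nowhere-vanishing direction `u`, evaluated at a perturbation `a` that is not a.e. zero. -/
theorem stmt_10 {M : Type*} [MetricSpace M] [CompactSpace M] [MeasurableSpace M] [BorelSpace M]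
    (μ : Measure M) [IsFiniteMeasure μ] (p : ℝ) (hp : 1 < p)
    (u a : M → ℝ) (hu : Continuous u) (ha : Continuous a)
    (hu0 : ∀ x, u x ≠ 0) (ha0 : ¬ a =ᵐ[μ] 0) :
    0 < (p - 1) * (∫ x, |u x| ^ p ∂μ) ^ (2 / p - 1)
          * (∫ x, |u x| ^ (p - 2) * a x * a x ∂μ)
        - (p - 2) * (∫ x, |u x| ^ p ∂μ) ^ (2 / p - 2)
          * (∫ x, |u x| ^ (p - 2) * u x * a x ∂μ) ^ 2 := by
  have integrable : ∀ f : M → ℝ, Continuous f → Integrable f μ := fun f hf =>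
    hf.integrable_of_hasCompactSupport (HasCompactSupport.of_compactSpace f)
  have hw_cont : Continuous fun x => |u x| ^ (p - 2) :=
    hu.abs.rpow_const fun x => Or.inl (abs_ne_zero.mpr (hu0 x))
  have hwpos : ∀ x, 0 < |u x| ^ (p - 2) := fun x => Real.rpow_pos_of_pos (abs_pos.mpr (hu0 x)) _
  have hA : ∫ x, |u x| ^ p ∂μ = ∫ x, |u x| ^ (p - 2) * u x * u x ∂μ := by
    simp only [abs_rpow_sub_two_mul_self (hu0 _)]
  have hμ : μ ≠ 0 := fun h => ha0 (by simp [h, Filter.EventuallyEq])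
  have hu_ae : ¬ u =ᵐ[μ] 0 := fun h =>
    hμ (Measure.measure_univ_eq_zero.mp (by simpa [Filter.EventuallyEq, ae_iff, hu0] using h))
  have huu := integrable _ ((hw_cont.mul hu).mul hu)
  have hua := integrable _ ((hw_cont.mul hu).mul ha)
  have haa := integrable _ ((hw_cont.mul ha).mul ha)
  rw [hA]
  exact lp_hessian_form_pos _ hp (integral_weight_mul_self_pos hwpos huu hu_ae)
    (integral_weight_mul_self_pos hwpos haa ha0)
    (sq_integral_weight_mul_le (fun x => (hwpos x).le) huu hua haa)
end

section
/- Let M be a compact metric space, λ a finite Borel measure on M, and p ∈ (1, ∞). Let f : [0,1] × M → (0, ∞) be continuous with continuous partial derivative ∂_t f, and let δ : [0,1] × M → ℝ be continuous with continuous partial derivative ∂_t δ. For positive h define the p-energy E_p(h) = (1/p)·∫_0^1 ∫_M |∂_t h/h|^p h dλ dt. Then ε ↦ E_p(f + ε·δ) is defined for all sufficiently small |ε| and is differentiable at ε = 0, with (d/dε) E_p(f + ε·δ) |_{ε=0} = ∫_0^1 ∫_M ( |∂_t f/f|^{p−2}·(∂_t f/f)·∂_t δ − ((p−1)/p)·|∂_t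 f/f|^p·δ ) dλ dt, with the convention |0|^{p−2}·0 = 0. -/
/-!
On the compact set `[0,1] × M` the density `f` is bounded below by some `c > 0`, and
`f, ∂_t f, δ, ∂_t δ` are bounded by some `C`. Hence for `|ε|` small `f + εδ ≥ c/2`, and both the
integrand `|a/f|^p f` of the energy along `f + εδ` and its `ε`-derivative
`p |a/f|^{p-2} (a/f) ∂_t δ - (p-1) |a/f|^p δ` (with `a = ∂_t f + ε ∂_t δ`) are bounded uniformly
in `(t, x, ε)`. Dominated differentiation under the integral sign for the finite measure
`dt ⊗ λ` gives the derivative at `ε = 0`, and Fubini turns the product integrals into iterated ones.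
-/

open MeasureTheory Set Filter Topology

/-- `F_p(f, a)^p = ∫ fisherRaoLagrangian p (a x) (f x) dλ`. -/
noncomputable def fisherRaoLagrangian (p u v : ℝ) : ℝ := |u / v| ^ p * v

/-- The derivative of `fisherRaoLagrangian p` at `(u, v)`, `v ≠ 0`, along `(u', v')`:
the partial derivatives are `p |u/v|^{p-2} (u/v)` and `-(p-1) |u/v|^p`. -/
noncomputable def fisherRaoLagrangianDeriv (p u v u' v' : ℝ) : ℝ :=
  p * (|u / v| ^ (p - 2) * (u / v)) * u' - (p - 1) * |u / v| ^ p * v'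

section Pointwise

variable {p : ℝ}

theorem abs_rpow_sub_two_mul_abs (hp : 1 < p) (y : ℝ) : |y| ^ (p - 2) * |y| = |y| ^ (p - 1) := by
  rw [← Real.rpow_add_one' (abs_nonneg y) (by linarith)]
  ring_nf

theorem abs_rpow_sub_two_mul_self_mul_self (hp : 1 < p) (y : ℝ) :
    |y| ^ (p - 2) * y * y = |y| ^ p := by
  rw [mul_assoc, ← abs_mul_abs_self, ← mul_assoc, abs_rpow_sub_two_mul_abs hp,
    ← Real.rpow_add_one' (abs_nonneg y) (by linarith)]
  ring_nf

theorem HasDerivAt.fisherRaoLagrangian (hp : 1 < p) {U V : ℝ → ℝ} {U' V' ε : ℝ}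
    (hU : HasDerivAt U U' ε) (hV : HasDerivAt V V' ε) (hV₀ : V ε ≠ 0) :
    HasDerivAt (fun e => fisherRaoLagrangian p (U e) (V e))
      (fisherRaoLagrangianDeriv p (U ε) (V ε) U' V') ε := by
  refine (((hasDerivAt_abs_rpow (U ε / V ε) hp).comp ε (hU.div hV hV₀)).mul hV).congr_deriv ?_
  simp only [fisherRaoLagrangianDeriv, Function.comp_apply, Pi.div_apply]
  rw [← abs_rpow_sub_two_mul_self_mul_self hp (U ε / V ε)]
  field_simp
  ring

theorem one_div_mul_fisherRaoLagrangianDeriv (hp : p ≠ 0) (u v u' v' : ℝ) :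
    1 / p * fisherRaoLagrangianDeriv p u v u' v' =
      |u / v| ^ (p - 2) * (u / v) * u' - (p - 1) / p * |u / v| ^ p * v' := by
  rw [fisherRaoLagrangianDeriv]
  field_simp

theorem abs_div_le_div_of_le {u v K κ : ℝ} (hκ : 0 < κ) (hκv : κ ≤ v) (hu : |u| ≤ K) :
    |u / v| ≤ K / κ := by
  rw [abs_div, abs_of_pos (hκ.trans_le hκv)]
  exact div_le_div₀ ((abs_nonneg u).trans hu) hu hκ hκv

theorem abs_fisherRaoLagrangian_le (hp : 0 ≤ p) {u v K κ : ℝ} (hκ : 0 < κ) (hκv : κ ≤ v)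
    (hvK : v ≤ K) (hu : |u| ≤ K) : |fisherRaoLagrangian p u v| ≤ (K / κ) ^ p * K := by
  have hv : 0 < v := hκ.trans_le hκv
  have huv := abs_div_le_div_of_le hκ hκv hu
  rw [fisherRaoLagrangian, abs_mul, abs_of_pos hv, abs_of_nonneg (by positivity)]
  exact mul_le_mul (Real.rpow_le_rpow (abs_nonneg _) huv hp) hvK hv.le
    (Real.rpow_nonneg ((abs_nonneg _).trans huv) p)

theorem abs_fisherRaoLagrangianDeriv_le (hp : 1 < p) {u v u' v' K κ : ℝ} (hκ : 0 < κ)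
    (hκv : κ ≤ v) (hu : |u| ≤ K) (hu' : |u'| ≤ K) (hv' : |v'| ≤ K) :
    |fisherRaoLagrangianDeriv p u v u' v'| ≤
      (p * (K / κ) ^ (p - 1) + (p - 1) * (K / κ) ^ p) * K := by
  have huv := abs_div_le_div_of_le hκ hκv hu
  calc |fisherRaoLagrangianDeriv p u v u' v'|
      ≤ p * |u / v| ^ (p - 1) * |u'| + (p - 1) * |u / v| ^ p * |v'| := by
        rw [fisherRaoLagrangianDeriv, ← abs_rpow_sub_two_mul_abs hp]
        refine (abs_sub _ _).trans_eq ?_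
        simp only [abs_mul, abs_of_pos (by linarith : 0 < p),
          abs_of_pos (by linarith : 0 < p - 1), abs_of_nonneg (Real.rpow_nonneg (abs_nonneg _) _)]
    _ ≤ p * (K / κ) ^ (p - 1) * K + (p - 1) * (K / κ) ^ p * K := by
        have : 0 ≤ K / κ := (abs_nonneg _).trans huv
        have : 0 ≤ p - 1 := by linarith
        gcongr
    _ = (p * (K / κ) ^ (p - 1) + (p - 1) * (K / κ) ^ p) * K := by ring

theorem half_le_add_mul {c C v a ε : ℝ} (hv : c ≤ v) (ha : |a| ≤ C) (hε : |ε| * C ≤ c / 2) :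
    c / 2 ≤ v + ε * a := by
  have : |ε * a| ≤ c / 2 := by
    rw [abs_mul]; exact (mul_le_mul_of_nonneg_left ha (abs_nonneg ε)).trans hε
  linarith [neg_abs_le (ε * a)]

theorem abs_add_mul_le_two_mul {C u b ε : ℝ} (hu : |u| ≤ C) (hb : |b| ≤ C) (hε : |ε| ≤ 1) :
    |u + ε * b| ≤ 2 * C := by
  have : |ε * b| ≤ C := by
    rw [abs_mul]; exact (mul_le_of_le_one_left (abs_nonneg b) hε).trans hb
  linarith [abs_add_le u (ε * b)]

end Pointwise

section Integral

variable {X : Type*} [MeasurableSpace X] {μ : Measure X} [IsFiniteMeasure μ] {p c C : ℝ}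
  {u v u' v' : X → ℝ}

theorem eventually_abs_le_one_and_abs_mul_le (hc : 0 < c) (C : ℝ) :
    ∀ᶠ ε in 𝓝 (0 : ℝ), |ε| ≤ 1 ∧ |ε| * C ≤ c / 2 := by
  have h : Continuous fun ε : ℝ => (|ε|, |ε| * C) := by fun_prop
  have h0 : (|(0 : ℝ)|, |(0 : ℝ)| * C) = (0, 0) := by simp
  exact (h.tendsto' 0 _ h0).eventually
    (prod_mem_nhds (Iic_mem_nhds one_pos) (Iic_mem_nhds (half_pos hc)))

theorem integrable_fisherRaoLagrangian_add_mul (hp : 1 < p) (hu : AEMeasurable u μ)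
    (hv : AEMeasurable v μ) (hu' : AEMeasurable u' μ) (hv' : AEMeasurable v' μ)
    (hc : 0 < c) (hvc : ∀ᵐ x ∂μ, c ≤ v x)
    (hC : ∀ᵐ x ∂μ, |u x| ≤ C ∧ |v x| ≤ C ∧ |u' x| ≤ C ∧ |v' x| ≤ C)
    {ε : ℝ} (hε : |ε| ≤ 1 ∧ |ε| * C ≤ c / 2) :
    Integrable (fun x => fisherRaoLagrangian p (u x + ε * u' x) (v x + ε * v' x)) μ := by
  refine .of_bound (by unfold fisherRaoLagrangian; fun_prop)
    ((2 * C / (c / 2)) ^ p * (2 * C)) ?_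
  filter_upwards [hvc, hC] with x hx ⟨hux, hvx, hu'x, hv'x⟩
  exact abs_fisherRaoLagrangian_le (by linarith) (half_pos hc) (half_le_add_mul hx hv'x hε.2)
    ((le_abs_self _).trans (abs_add_mul_le_two_mul hvx hv'x hε.1))
    (abs_add_mul_le_two_mul hux hu'x hε.1)

theorem hasDerivAt_integral_fisherRaoLagrangian_add_mul (hp : 1 < p) (hu : AEMeasurable u μ)
    (hv : AEMeasurable v μ) (hu' : AEMeasurable u' μ) (hv' : AEMeasurable v' μ)
    (hc : 0 < c) (hvc : ∀ᵐ x ∂μ, c ≤ v x)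
    (hC : ∀ᵐ x ∂μ, |u x| ≤ C ∧ |v x| ≤ C ∧ |u' x| ≤ C ∧ |v' x| ≤ C) :
    Integrable (fun x => fisherRaoLagrangianDeriv p (u x) (v x) (u' x) (v' x)) μ ∧
    HasDerivAt (fun ε => ∫ x, fisherRaoLagrangian p (u x + ε * u' x) (v x + ε * v' x) ∂μ)
      (∫ x, fisherRaoLagrangianDeriv p (u x) (v x) (u' x) (v' x) ∂μ) 0 := by
  have hs := eventually_abs_le_one_and_abs_mul_le hc C
  have key := hasDerivAt_integral_of_dominated_loc_of_deriv_le (μ := μ) (x₀ := 0)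
    (F := fun ε x => fisherRaoLagrangian p (u x + ε * u' x) (v x + ε * v' x))
    (bound := fun _ =>
      (p * (2 * C / (c / 2)) ^ (p - 1) + (p - 1) * (2 * C / (c / 2)) ^ p) * (2 * C))
    (F' := fun ε x => fisherRaoLagrangianDeriv p (u x + ε * u' x) (v x + ε * v' x) (u' x) (v' x))
    hs (.of_forall fun ε => by unfold fisherRaoLagrangian; fun_prop)
    (integrable_fisherRaoLagrangian_add_mul hp hu hv hu' hv' hc hvc hC hs.self_of_nhds)
    (by unfold fisherRaoLagrangianDeriv; fun_prop) ?_ (integrable_const _) ?_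
  · simpa using key
  · filter_upwards [hvc, hC] with x hx ⟨hux, hvx, hu'x, hv'x⟩ ε hε
    exact abs_fisherRaoLagrangianDeriv_le hp (half_pos hc) (half_le_add_mul hx hv'x hε.2)
      (abs_add_mul_le_two_mul hux hu'x hε.1) (by linarith [abs_nonneg (u' x)])
      (by linarith [abs_nonneg (v' x)])
  · filter_upwards [hvc, hC] with x hx ⟨hux, hvx, hu'x, hv'x⟩ ε hε
    exact ((hasDerivAt_mul_const _).const_add _).fisherRaoLagrangian hp
      ((hasDerivAt_mul_const _).const_add _)
      ((half_pos hc).trans_le (half_le_add_mul hx hv'x hε.2)).ne'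

end Integral

theorem intervalIntegral_integral_eq_integral_prod {M : Type*} [MeasurableSpace M]
    {lam : Measure M} [SFinite lam] {a b : ℝ} (hab : a ≤ b) {F : ℝ → M → ℝ}
    (hF : Integrable (Function.uncurry F) ((volume.restrict (Icc a b)).prod lam)) :
    ∫ t in a..b, ∫ x, F t x ∂lam = ∫ q, F q.1 q.2 ∂(volume.restrict (Icc a b)).prod lam := by
  rw [intervalIntegral.integral_of_le hab, ← integral_Icc_eq_integral_Ioc, integral_integral hF]

theorem stmt_13_general {M : Type*} [MetricSpace M] [CompactSpace M] [MeasurableSpace M] [BorelSpace M]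
    (lam : Measure M) [IsFiniteMeasure lam] (p : ℝ) (hp : 1 < p)
    (f f' δ δ' : ℝ → M → ℝ)
    (hf_cont : ContinuousOn (fun q : ℝ × M => f q.1 q.2) (Set.Icc 0 1 ×ˢ Set.univ))
    (hf_pos : ∀ t ∈ Set.Icc (0 : ℝ) 1, ∀ x, 0 < f t x)
    (hf'_cont : ContinuousOn (fun q : ℝ × M => f' q.1 q.2) (Set.Icc 0 1 ×ˢ Set.univ))
    (hδ_cont : ContinuousOn (fun q : ℝ × M => δ q.1 q.2) (Set.Icc 0 1 ×ˢ Set.univ))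
    (hδ'_cont : ContinuousOn (fun q : ℝ × M => δ' q.1 q.2) (Set.Icc 0 1 ×ˢ Set.univ)) :
    (∃ ε₀ > (0 : ℝ), ∀ ε : ℝ, |ε| < ε₀ →
      ∀ t ∈ Set.Icc (0 : ℝ) 1, ∀ x, 0 < f t x + ε * δ t x) ∧
    HasDerivAt (fun ε : ℝ => (1 / p) * ∫ t in (0 : ℝ)..1, ∫ x,
        |(f' t x + ε * δ' t x) / (f t x + ε * δ t x)| ^ p * (f t x + ε * δ t x) ∂lam)
      (∫ t in (0 : ℝ)..1, ∫ x,
        (|f' t x / f t x| ^ (p - 2) * (f' t x / f t x) * δ' t x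
          - ((p - 1) / p) * |f' t x / f t x| ^ p * δ t x) ∂lam) 0 := by
  set K := Icc (0 : ℝ) 1 ×ˢ (univ : Set M)
  have hK : IsCompact K := isCompact_Icc.prod isCompact_univ
  obtain ⟨c, hc, hfc⟩ := hK.exists_forall_le' hf_cont fun q hq => hf_pos q.1 hq.1 q.2
  obtain ⟨C, hC⟩ := hK.exists_bound_of_continuousOn
    (hf'_cont.prodMk (hf_cont.prodMk (hδ'_cont.prodMk hδ_cont)))
  simp only [Prod.norm_def, max_le_iff, Real.norm_eq_abs] at hC
  have hsmall := eventually_abs_le_one_and_abs_mul_le hc C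
  refine ⟨?_, ?_⟩
  · obtain ⟨ε₀, hε₀, hε₀small⟩ := Metric.eventually_nhds_iff.1 hsmall
    refine ⟨ε₀, hε₀, fun ε hε t ht x => (half_pos hc).trans_le (half_le_add_mul
      (hfc (t, x) ⟨ht, trivial⟩) (hC (t, x) ⟨ht, trivial⟩).2.2.2 (hε₀small ?_).2)⟩
    rwa [Real.dist_0_eq_abs]
  set μ := (volume.restrict (Icc (0 : ℝ) 1)).prod lam
  have hμ : μ = (volume.prod lam).restrict K := by
    rw [← Measure.prod_restrict, Measure.restrict_univ]
  have hKm : MeasurableSet K := measurableSet_Icc.prod .univ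
  have hμK : ∀ᵐ q ∂μ, q ∈ K := hμ ▸ ae_restrict_mem hKm
  have hf'm := hμ ▸ hf'_cont.aemeasurable hKm
  have hfm := hμ ▸ hf_cont.aemeasurable hKm
  have hδ'm := hμ ▸ hδ'_cont.aemeasurable hKm
  have hδm := hμ ▸ hδ_cont.aemeasurable hKm
  obtain ⟨hint, hderiv⟩ := hasDerivAt_integral_fisherRaoLagrangian_add_mul hp
    hf'm hfm hδ'm hδm hc (hμK.mono hfc) (hμK.mono hC)
  refine ((hderiv.const_mul (1 / p)).congr_of_eventuallyEq ?_).congr_deriv ?_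
  · filter_upwards [hsmall] with ε hε
    rw [intervalIntegral_integral_eq_integral_prod zero_le_one
      (integrable_fisherRaoLagrangian_add_mul hp hf'm hfm hδ'm hδm hc (hμK.mono hfc)
        (hμK.mono hC) hε)]
    rfl
  · have h := one_div_mul_fisherRaoLagrangianDeriv (by linarith : p ≠ 0)
    rw [← integral_const_mul, intervalIntegral_integral_eq_integral_prod zero_le_one]
    · simp only [h]; rfl
    · have := hint.const_mul (1 / p)
      simp only [h] at this
      exact this

/-- First variation of the `p`-energy `E_p(h) = (1/p)·∫₀¹∫ |∂_t h/h|^p h dλ dt` of the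
`L^p`-Fisher–Rao metric along a path of positive densities `f` in the direction `δ`:
`ε ↦ E_p(f + ε·δ)` is defined for small `|ε|` and differentiable at `0`, with derivative
`∫₀¹∫ (|∂_t f/f|^{p−2}(∂_t f/f)·∂_t δ − ((p−1)/p)·|∂_t f/f|^p·δ) dλ dt`. -/
theorem stmt_13 {M : Type*} [MetricSpace M] [CompactSpace M] [MeasurableSpace M] [BorelSpace M]
    (lam : Measure M) [IsFiniteMeasure lam] (p : ℝ) (hp : 1 < p)
    (f f' δ δ' : ℝ → M → ℝ)
    (hf_cont : ContinuousOn (fun q : ℝ × M => f q.1 q.2) (Set.Icc 0 1 ×ˢ Set.univ))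
    (hf_pos : ∀ t ∈ Set.Icc (0 : ℝ) 1, ∀ x, 0 < f t x)
    (hf'_cont : ContinuousOn (fun q : ℝ × M => f' q.1 q.2) (Set.Icc 0 1 ×ˢ Set.univ))
    (hf_deriv : ∀ x, ∀ t ∈ Set.Icc (0 : ℝ) 1,
      HasDerivWithinAt (fun s => f s x) (f' t x) (Set.Icc 0 1) t)
    (hδ_cont : ContinuousOn (fun q : ℝ × M => δ q.1 q.2) (Set.Icc 0 1 ×ˢ Set.univ))
    (hδ'_cont : ContinuousOn (fun q : ℝ × M => δ' q.1 q.2) (Set.Icc 0 1 ×ˢ Set.univ))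
    (hδ_deriv : ∀ x, ∀ t ∈ Set.Icc (0 : ℝ) 1,
      HasDerivWithinAt (fun s => δ s x) (δ' t x) (Set.Icc 0 1) t) :
    (∃ ε₀ > (0 : ℝ), ∀ ε : ℝ, |ε| < ε₀ →
      ∀ t ∈ Set.Icc (0 : ℝ) 1, ∀ x, 0 < f t x + ε * δ t x) ∧
    HasDerivAt (fun ε : ℝ => (1 / p) * ∫ t in (0 : ℝ)..1, ∫ x,
        |(f' t x + ε * δ' t x) / (f t x + ε * δ t x)| ^ p * (f t x + ε * δ t x) ∂lam)
      (∫ t in (0 : ℝ)..1, ∫ x,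
        (|f' t x / f t x| ^ (p - 2) * (f' t x / f t x) * δ' t x
          - ((p - 1) / p) * |f' t x / f t x| ^ p * δ t x) ∂lam) 0 :=
  stmt_13_general lam p hp f f' δ δ' hf_cont hf_pos hf'_cont hδ_cont hδ'_cont
end

section
/- Let T ∈ (0, ∞] and let τ : [0, T) → ℝ be twice differentiable with τ(0) = 0 and τ′(0) = 1. Suppose there is a function k : [0, T) → ℝ with k(t) ≥ 0 for all t, such that k(t) = 0 if and only if τ(t) = 0, and τ″(t)·τ(t) = 2·k(t)·τ′(t)² for all t ∈ [0, T). Then τ′(t) ≥ 1 for all t ∈ [0, T) and τ(t) > t for all t ∈ (0, T). Consequently, if M is a compact topological space and ξ : M → ℝ is continuous with m := −min_M ξ > 0, then every t ∈ (0, T) for which 1 + τ(t)·ξ(x) > 0 for all x ∈ M satisfies t < 1/m. -/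
/-!
Wherever `τ > 0` the equation forces `τ'' ≥ 0`, so `τ'` is nondecreasing there and stays `≥ τ'(0) = 1`;
then `k > 0` makes `τ''` strictly positive, hence `τ' > 1` and `τ(t) > t`. A first zero `c > 0`
of `τ` is therefore impossible, since up to `c` this would give `τ(c) > c > 0`. Finally, if
`1 + τ(t) ξ > 0` on `M`, then `-1/τ(t)` is a lower bound of `ξ`, so `m ≤ 1/τ(t) < 1/t`.
-/

open scoped ENNReal
open Set Filter Topology

section Calculus

variable {f f' : ℝ → ℝ} {a b : ℝ}

lemma monotoneOn_Icc_of_hasDerivWithinAt_nonneg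
    (hf : ∀ x ∈ Icc a b, HasDerivWithinAt f (f' x) (Icc a b) x)
    (hf' : ∀ x ∈ Ioo a b, 0 ≤ f' x) : MonotoneOn f (Icc a b) :=
  monotoneOn_of_hasDerivWithinAt_nonneg (convex_Icc a b)
    (fun x hx => (hf x hx).continuousWithinAt)
    (fun x hx => (hf x (interior_subset hx)).mono interior_subset)
    (fun x hx => hf' x (by rwa [interior_Icc] at hx))

lemma strictMonoOn_Icc_of_hasDerivWithinAt_pos
    (hf : ∀ x ∈ Icc a b, HasDerivWithinAt f (f' x) (Icc a b) x)
    (hf' : ∀ x ∈ Ioo a b, 0 < f' x) : StrictMonoOn f (Icc a b) :=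
  strictMonoOn_of_hasDerivWithinAt_pos (convex_Icc a b)
    (fun x hx => (hf x hx).continuousWithinAt)
    (fun x hx => (hf x (interior_subset hx)).mono interior_subset)
    (fun x hx => hf' x (by rwa [interior_Icc] at hx))

lemma HasDerivWithinAt.eventually_lt_of_pos {s : Set ℝ} {x d : ℝ}
    (hf : HasDerivWithinAt f d s x) (hs : s ∈ 𝓝[>] x) (hd : 0 < d) :
    ∀ᶠ y in 𝓝[>] x, f x < f y := by
  have hslope : Tendsto (slope f x) (𝓝[>] x) (𝓝 d) :=
    (hasDerivWithinAt_iff_tendsto_slope' (lt_irrefl x)).1 (hf.mono_of_mem_nhdsWithin hs)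
  filter_upwards [hslope.eventually (eventually_gt_nhds hd), self_mem_nhdsWithin]
    with y hy hxy
  rw [slope_def_field] at hy
  exact sub_pos.1 ((div_pos_iff_of_pos_right (sub_pos.2 hxy)).1 hy)

lemma ContinuousOn.exists_first_nonpos (hf : ContinuousOn f (Icc a b)) (hab : a < b)
    (hpos : ∀ᶠ x in 𝓝[>] a, 0 < f x) (hb : f b ≤ 0) :
    ∃ c ∈ Ioc a b, f c ≤ 0 ∧ ∀ x ∈ Ioo a c, 0 < f x := by
  obtain ⟨ε, haε, hε⟩ := mem_nhdsGT_iff_exists_Ioo_subset.1 hpos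
  have hεb : ε ≤ b := not_lt.1 fun hbε => (hb.trans_lt (hε ⟨hab, hbε⟩)).false
  set Z := Icc ε b ∩ f ⁻¹' Iic 0
  have hZ : IsClosed Z :=
    (hf.mono (Icc_subset_Icc_left haε.le)).preimage_isClosed_of_isClosed isClosed_Icc isClosed_Iic
  have hZbdd : BddBelow Z := ⟨ε, fun x hx => hx.1.1⟩
  have hcZ : sInf Z ∈ Z := hZ.csInf_mem ⟨b, ⟨hεb, le_rfl⟩, hb⟩ hZbdd
  refine ⟨sInf Z, ⟨haε.trans_le hcZ.1.1, hcZ.1.2⟩, hcZ.2, fun x hx => ?_⟩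
  rcases lt_or_ge x ε with hxε | hεx
  · exact hε ⟨hx.1, hxε⟩
  · exact not_le.1 fun hx0 => (csInf_le hZbdd ⟨⟨hεx, hx.2.le.trans hcZ.1.2⟩, hx0⟩).not_gt hx.2

end Calculus

structure IsReparamODESolution (b : ℝ) (τ τ' τ'' k : ℝ → ℝ) : Prop where
  hasDerivWithinAt_τ : ∀ t ∈ Icc 0 b, HasDerivWithinAt τ (τ' t) (Icc 0 b) t
  hasDerivWithinAt_τ' : ∀ t ∈ Icc 0 b, HasDerivWithinAt τ' (τ'' t) (Icc 0 b) t
  nonneg : ∀ t ∈ Icc 0 b, 0 ≤ k t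
  eq_zero_iff : ∀ t ∈ Icc 0 b, k t = 0 ↔ τ t = 0
  ode : ∀ t ∈ Icc 0 b, τ'' t * τ t = 2 * k t * τ' t ^ 2

namespace IsReparamODESolution

variable {b c : ℝ} {τ τ' τ'' k : ℝ → ℝ}

lemma mono (h : IsReparamODESolution b τ τ' τ'' k) (hcb : c ≤ b) :
    IsReparamODESolution c τ τ' τ'' k where
  hasDerivWithinAt_τ t ht :=
    (h.hasDerivWithinAt_τ t (Icc_subset_Icc_right hcb ht)).mono (Icc_subset_Icc_right hcb)
  hasDerivWithinAt_τ' t ht :=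
    (h.hasDerivWithinAt_τ' t (Icc_subset_Icc_right hcb ht)).mono (Icc_subset_Icc_right hcb)
  nonneg t ht := h.nonneg t (Icc_subset_Icc_right hcb ht)
  eq_zero_iff t ht := h.eq_zero_iff t (Icc_subset_Icc_right hcb ht)
  ode t ht := h.ode t (Icc_subset_Icc_right hcb ht)

lemma one_lt_deriv_of_pos_on_Ioo (h : IsReparamODESolution b τ τ' τ'' k) (h1 : τ' 0 = 1)
    (hb : 0 < b) (hpos : ∀ t ∈ Ioo 0 b, 0 < τ t) : 1 < τ' b := by
  have hIoo : Ioo 0 b ⊆ Icc 0 b := Ioo_subset_Icc_self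
  have hmono : MonotoneOn τ' (Icc 0 b) :=
    monotoneOn_Icc_of_hasDerivWithinAt_nonneg h.hasDerivWithinAt_τ' fun t ht => by
      have := h.ode t (hIoo ht)
      nlinarith [hpos t ht, h.nonneg t (hIoo ht), sq_nonneg (τ' t)]
  have hge : ∀ t ∈ Icc 0 b, 1 ≤ τ' t := fun t ht =>
    h1 ▸ hmono (left_mem_Icc.2 hb.le) ht ht.1
  have hstrict : StrictMonoOn τ' (Icc 0 b) :=
    strictMonoOn_Icc_of_hasDerivWithinAt_pos h.hasDerivWithinAt_τ' fun t ht => by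
      have hk : 0 < k t := (h.nonneg t (hIoo ht)).lt_of_ne
        fun hk => (hpos t ht).ne' ((h.eq_zero_iff t (hIoo ht)).1 hk.symm)
      have hrhs : 0 < 2 * k t * τ' t ^ 2 := by
        have := hge t (hIoo ht)
        positivity
      have := h.ode t (hIoo ht)
      nlinarith [hpos t ht]
  exact h1 ▸ hstrict (left_mem_Icc.2 hb.le) (right_mem_Icc.2 hb.le) hb

lemma lt_of_pos_on_Ioo (h : IsReparamODESolution b τ τ' τ'' k) (h0 : τ 0 = 0) (h1 : τ' 0 = 1)
    (hb : 0 < b) (hpos : ∀ t ∈ Ioo 0 b, 0 < τ t) : b < τ b := by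
  have hmono : StrictMonoOn (fun t => τ t - t) (Icc 0 b) :=
    strictMonoOn_Icc_of_hasDerivWithinAt_pos (f' := fun t => τ' t - 1)
      (fun t ht => (h.hasDerivWithinAt_τ t ht).sub (hasDerivWithinAt_id t _))
      fun t ht => sub_pos.2 <| (h.mono ht.2.le).one_lt_deriv_of_pos_on_Ioo h1 ht.1
        fun s hs => hpos s ⟨hs.1, hs.2.trans ht.2⟩
  have := hmono (left_mem_Icc.2 hb.le) (right_mem_Icc.2 hb.le) hb
  simp only [h0, sub_zero] at this
  linarith

lemma pos (h : IsReparamODESolution b τ τ' τ'' k) (h0 : τ 0 = 0) (h1 : τ' 0 = 1)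
    (hb : 0 < b) : 0 < τ b := by
  by_contra! hτb
  have hderiv : HasDerivWithinAt τ 1 (Icc 0 b) 0 :=
    h1 ▸ h.hasDerivWithinAt_τ 0 (left_mem_Icc.2 hb.le)
  have hnear := hderiv.eventually_lt_of_pos (Icc_mem_nhdsGT hb) one_pos
  rw [h0] at hnear
  obtain ⟨c, hc, hτc, hpos⟩ := ContinuousOn.exists_first_nonpos
    (fun t ht => (h.hasDerivWithinAt_τ t ht).continuousWithinAt) hb hnear hτb
  linarith [(h.mono hc.2).lt_of_pos_on_Ioo h0 h1 hc.1 hpos, hc.1]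

lemma one_lt_deriv (h : IsReparamODESolution b τ τ' τ'' k) (h0 : τ 0 = 0) (h1 : τ' 0 = 1)
    (hb : 0 < b) : 1 < τ' b :=
  h.one_lt_deriv_of_pos_on_Ioo h1 hb fun _ ht => (h.mono ht.2.le).pos h0 h1 ht.1

lemma lt_self (h : IsReparamODESolution b τ τ' τ'' k) (h0 : τ 0 = 0) (h1 : τ' 0 = 1)
    (hb : 0 < b) : b < τ b :=
  h.lt_of_pos_on_Ioo h0 h1 hb fun _ ht => (h.mono ht.2.le).pos h0 h1 ht.1

end IsReparamODESolution

lemma le_one_div_of_isGLB_range {M : Type*} {ξ : M → ℝ} {s m : ℝ} (hs : 0 < s) (hm : 0 < m)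
    (hglb : IsGLB (range ξ) (-m)) (hξ : ∀ x, 0 < 1 + s * ξ x) : s ≤ 1 / m := by
  have hlower : -1 / s ∈ lowerBounds (range ξ) := by
    rintro _ ⟨x, rfl⟩
    rw [div_le_iff₀ hs]
    linarith [hξ x]
  have hms : -1 / s ≤ -m := hglb.2 hlower
  rw [neg_div, neg_le_neg_iff] at hms
  exact (le_one_div hs hm).2 hms

theorem stmt_16_general (T : ℝ≥0∞)
    (S : Set ℝ) (hS : S = {t : ℝ | 0 ≤ t ∧ ENNReal.ofReal t < T})
    (τ τ' τ'' k : ℝ → ℝ)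
    (hd1 : ∀ t ∈ S, HasDerivWithinAt τ (τ' t) S t)
    (hd2 : ∀ t ∈ S, HasDerivWithinAt τ' (τ'' t) S t)
    (h0 : τ 0 = 0) (h1 : τ' 0 = 1)
    (hk0 : ∀ t ∈ S, 0 ≤ k t)
    (hkz : ∀ t ∈ S, (k t = 0 ↔ τ t = 0))
    (hODE : ∀ t ∈ S, τ'' t * τ t = 2 * k t * (τ' t) ^ 2) :
    (∀ t ∈ S, 1 ≤ τ' t) ∧
    (∀ t ∈ S, 0 < t → t < τ t) ∧
    (∀ (M : Type) [TopologicalSpace M] [CompactSpace M] (ξ : M → ℝ), Continuous ξ →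
      ∀ m : ℝ, 0 < m → IsGLB (Set.range ξ) (-m) →
        ∀ t ∈ S, 0 < t → (∀ x, 0 < 1 + τ t * ξ x) → t < 1 / m) := by
  have hIcc : ∀ t ∈ S, Icc 0 t ⊆ S := by
    intro t ht s hs
    rw [hS] at ht ⊢
    exact ⟨hs.1, (ENNReal.ofReal_le_ofReal hs.2).trans_lt ht.2⟩
  have hsol : ∀ t ∈ S, IsReparamODESolution t τ τ' τ'' k := fun t ht =>
    { hasDerivWithinAt_τ := fun s hs => (hd1 s (hIcc t ht hs)).mono (hIcc t ht)
      hasDerivWithinAt_τ' := fun s hs => (hd2 s (hIcc t ht hs)).mono (hIcc t ht)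
      nonneg := fun s hs => hk0 s (hIcc t ht hs)
      eq_zero_iff := fun s hs => hkz s (hIcc t ht hs)
      ode := fun s hs => hODE s (hIcc t ht hs) }
  have hlt : ∀ t ∈ S, 0 < t → t < τ t := fun t ht ht0 => (hsol t ht).lt_self h0 h1 ht0
  refine ⟨fun t ht => ?_, hlt, fun M _ _ ξ _ m hm hglb t ht ht0 hξ => ?_⟩
  · have ht0 : 0 ≤ t := by rw [hS] at ht; exact ht.1
    rcases ht0.eq_or_lt with rfl | ht0
    · exact h1.ge
    · exact ((hsol t ht).one_lt_deriv h0 h1 ht0).le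
  · exact (hlt t ht ht0).trans_le
      (le_one_div_of_isGLB_range (ht0.trans (hlt t ht ht0)) hm hglb hξ)

/-- Growth of solutions of the reparametrization ODE `τ″·τ = 2·k·(τ′)²` with
`k ≥ 0` vanishing exactly where `τ` does, `τ(0) = 0`, `τ′(0) = 1`: one gets `τ′ ≥ 1` and
`τ(t) > t`. Consequently, geodesics leave the positive part of the sphere in time `< 1/m`
where `m = −min ξ > 0`. -/
theorem stmt_16 (T : ℝ≥0∞) (hT : 0 < T)
    (S : Set ℝ) (hS : S = {t : ℝ | 0 ≤ t ∧ ENNReal.ofReal t < T})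
    (τ τ' τ'' k : ℝ → ℝ)
    (hd1 : ∀ t ∈ S, HasDerivWithinAt τ (τ' t) S t)
    (hd2 : ∀ t ∈ S, HasDerivWithinAt τ' (τ'' t) S t)
    (h0 : τ 0 = 0) (h1 : τ' 0 = 1)
    (hk0 : ∀ t ∈ S, 0 ≤ k t)
    (hkz : ∀ t ∈ S, (k t = 0 ↔ τ t = 0))
    (hODE : ∀ t ∈ S, τ'' t * τ t = 2 * k t * (τ' t) ^ 2) :
    (∀ t ∈ S, 1 ≤ τ' t) ∧
    (∀ t ∈ S, 0 < t → t < τ t) ∧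
    (∀ (M : Type) [TopologicalSpace M] [CompactSpace M] (ξ : M → ℝ), Continuous ξ →
      ∀ m : ℝ, 0 < m → IsGLB (Set.range ξ) (-m) →
        ∀ t ∈ S, 0 < t → (∀ x, 0 < 1 + τ t * ξ x) → t < 1 / m) :=
  stmt_16_general T S hS τ τ' τ'' k hd1 hd2 h0 h1 hk0 hkz hODE
end
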